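/- arXiv:2309.12843 — 6 statements merged into one kernel-verified Lean document; each statement's English description precedes it below -/
import Mathlib

section
/- For all integers k ≥ 1 and n ≥ 1, one has D_k(n) ≤ min{2^b : b ≥ 0, 2^b ≥ n}; that is, the discriminator D_k(n) never exceeds the smallest power of 2 that is at least n. -/
/-- The Shallit sequence `U(k)`: `U₀ = 0`, `U₁ = 1`,
`U_{n+2} = (4k+2) U_{n+1} - U_n`. -/
def shallitU (k : ℕ) : ℕ → ℤ
  | 0 => 0
  | 1 => 1
  | n + 2 => (4 * (k : ℤ) + 2) * shallitU k (n + 1) - shallitU k n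

/-- `U₀(k), …, U_{n-1}(k)` are pairwise incongruent modulo `m`. -/
def Discriminates (k m n : ℕ) : Prop :=
  ∀ i j : ℕ, i < n → j < n → shallitU k i ≡ shallitU k j [ZMOD (m : ℤ)] → i = j

/-- The discriminator `D_k(n)`: the smallest positive integer `m` such that
`U₀(k), …, U_{n-1}(k)` are pairwise incongruent modulo `m`. -/
noncomputable def shallitD (k n : ℕ) : ℕ :=
  sInf {m : ℕ | 0 < m ∧ Discriminates k m n}

/-- The index of appearance `z_k(m)`: the smallest `n ≥ 1` with `m ∣ U_n(k)`. -/
noncomputable def shallitZ (k m : ℕ) : ℕ :=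
  sInf {n : ℕ | 0 < n ∧ (m : ℤ) ∣ shallitU k n}

/-- The incongruence index `ι_k(m)`: the largest `j` such that
`U₀(k), …, U_{j-1}(k)` are pairwise distinct modulo `m`. -/
noncomputable def shallitIota (k m : ℕ) : ℕ :=
  sSup {j : ℕ | Discriminates k m j}

/-- `P(N)`: positive integers all of whose prime divisors divide `N`. -/
def setP (N : ℕ) : Set ℕ :=
  {m | 0 < m ∧ ∀ p : ℕ, p.Prime → p ∣ m → p ∣ N}

/-- The set `A_k`. -/
def setA (k : ℕ) : Set ℕ :=
  {m | 0 < m ∧ Odd m ∧ (∀ p : ℕ, p.Prime → p ∣ m → p ∣ k) ∧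
    (k % 9 = 6 → ¬ (9 ∣ m))}

/-- The set `B_k`. -/
def setB (k : ℕ) : Set ℕ :=
  {m | 0 < m ∧ Even m ∧ (∀ p : ℕ, p.Prime → p ∣ m → p ∣ k * (k + 1)) ∧
    ((k % 9 = 2 ∨ k % 9 = 6) → ¬ (9 ∣ m))}

/-- The set `S_{k,n} = {m ∈ A_k ∪ B_k : m ≥ n}`. -/
def setS (k n : ℕ) : Set ℕ :=
  {m | m ∈ setA k ∪ setB k ∧ n ≤ m}

/-- The set `A_{5,k} = {a·5^b : a ∈ A_k, b ≥ 1}`. -/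
def setA5 (k : ℕ) : Set ℕ :=
  {m | ∃ a b : ℕ, a ∈ setA k ∧ 1 ≤ b ∧ m = a * 5 ^ b}

/-- The set `B_{5,k} = {a·5^b : a ∈ B_k, b ≥ 1}`. -/
def setB5 (k : ℕ) : Set ℕ :=
  {m | ∃ a b : ℕ, a ∈ setB k ∧ 1 ≤ b ∧ m = a * 5 ^ b}

/-!
For `a = 2k + 1`, `U(k)` is the Pell `y`-sequence of `d = a² - 1`: both satisfy
`y_{n+2} = 2a y_{n+1} - y_n`. The addition formulas give `y_{i+2b} - y_i = 2 x_{i+b} y_b`, where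
`x_{i+b}` is odd because `a` is, and `y_n ≡ n (mod 2)`. By induction on `e`, `2^e ∣ y_{i+m} - y_i`
therefore forces `2^e ∣ m`, so `y_0, …, y_{2^e - 1}` are pairwise incongruent modulo `2^e`.
-/

namespace Pell

variable {a : ℕ} (a1 : 1 < a)

theorem yn_add_two_mul (i b : ℕ) :
    yn a1 (i + 2 * b) = yn a1 i + 2 * xn a1 (i + b) * yn a1 b := by
  have hsub := yz_sub a1 (Nat.le_add_left b i)
  have hadd := congrArg (Nat.cast : ℕ → ℤ) (yn_add a1 (i + b) b)
  rw [Nat.add_sub_cancel] at hsub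
  unfold yz xz at hsub
  rw [show i + 2 * b = i + b + b by ring]
  zify
  push_cast at hadd
  linear_combination hadd - hsub

theorem odd_xn (ha : Odd a) : ∀ n, Odd (xn a1 n)
  | 0 => odd_one
  | 1 => by rwa [xn_one]
  | n + 2 => by
    have h : Even (xn a1 (n + 2) + xn a1 n) := by
      rw [xn_succ_succ, mul_assoc]; exact even_two_mul _
    exact Nat.not_even_iff_odd.mp
      ((Nat.even_add.mp h).not.mpr (Nat.not_even_iff_odd.mpr (odd_xn ha n)))

theorem two_pow_dvd_of_yn_add_modEq (ha : Odd a) {e : ℕ} :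
    ∀ {i m : ℕ}, yn a1 (i + m) ≡ yn a1 i [MOD 2 ^ e] → 2 ^ e ∣ m := by
  induction e with
  | zero => intros; exact one_dvd _
  | succ e ih =>
    intro i m h
    have hm : m ≡ 0 [MOD 2] := by
      refine Nat.ModEq.add_left_cancel' i ?_
      exact (yn_modEq_two a1 _).symm.trans
        (((h.of_dvd (pow_dvd_pow 2 e.succ_pos)).trans (yn_modEq_two a1 i)))
    obtain ⟨b, rfl⟩ := (Nat.modEq_zero_iff_dvd.mp hm)
    rw [yn_add_two_mul] at h
    have h2 : 2 ^ e ∣ xn a1 (i + b) * yn a1 b := by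
      have := (Nat.modEq_iff_dvd' (Nat.le_add_right _ _)).mp h.symm
      rw [Nat.add_sub_cancel_left, pow_succ', mul_assoc] at this
      exact Nat.dvd_of_mul_dvd_mul_left two_pos this
    have hcop : Nat.Coprime (2 ^ e) (xn a1 (i + b)) :=
      (Nat.coprime_two_left.mpr (odd_xn a1 ha _)).pow_left e
    have hb : yn a1 (0 + b) ≡ yn a1 0 [MOD 2 ^ e] := by
      rw [zero_add, yn_zero]
      exact Nat.modEq_zero_iff_dvd.mpr (hcop.dvd_of_dvd_mul_left h2)
    rw [pow_succ']
    exact Nat.mul_dvd_mul_left 2 (ih hb)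

theorem eq_of_yn_modEq_two_pow (ha : Odd a) {e i j : ℕ} (hi : i < 2 ^ e) (hj : j < 2 ^ e)
    (h : yn a1 i ≡ yn a1 j [MOD 2 ^ e]) : i = j := by
  wlog hij : i ≤ j generalizing i j
  · exact (this hj hi h.symm (le_of_not_ge hij)).symm
  obtain ⟨m, rfl⟩ := Nat.exists_eq_add_of_le hij
  have hm := two_pow_dvd_of_yn_add_modEq a1 ha h.symm
  rw [Nat.eq_zero_of_dvd_of_lt hm (by omega), add_zero]

end Pell

theorem shallitU_eq_yn {k : ℕ} (hk : 1 ≤ k) :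
    ∀ n, shallitU k n = Pell.yn (a := 2 * k + 1) (by omega) n
  | 0 => rfl
  | 1 => by simp [shallitU]
  | n + 2 => by
    rw [shallitU, ← Pell.yz, Pell.yz_succ_succ, Pell.yz, Pell.yz, ← shallitU_eq_yn hk n,
      ← shallitU_eq_yn hk (n + 1)]
    push_cast
    ring

theorem discriminates_two_pow {k e n : ℕ} (hk : 1 ≤ k) (hn : n ≤ 2 ^ e) :
    Discriminates k (2 ^ e) n := by
  intro i j hi hj h
  rw [shallitU_eq_yn hk, shallitU_eq_yn hk, Int.natCast_modEq_iff] at h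
  exact Pell.eq_of_yn_modEq_two_pow _ (odd_two_mul_add_one k) (by omega) (by omega) h

theorem stmt4_general (k n : ℕ) (hk : 1 ≤ k) :
    shallitD k n ≤ sInf {s : ℕ | (∃ b : ℕ, s = 2 ^ b) ∧ n ≤ s} := by
  obtain ⟨⟨e, he⟩, hn⟩ : sInf {s : ℕ | (∃ b : ℕ, s = 2 ^ b) ∧ n ≤ s} ∈
      {s : ℕ | (∃ b : ℕ, s = 2 ^ b) ∧ n ≤ s} :=
    Nat.sInf_mem ⟨2 ^ n, ⟨n, rfl⟩, Nat.lt_two_pow_self.le⟩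
  rw [he] at hn ⊢
  exact Nat.sInf_le ⟨by positivity, discriminates_two_pow hk hn⟩

theorem stmt4 (k n : ℕ) (hk : 1 ≤ k) (hn : 1 ≤ n) :
    shallitD k n ≤ sInf {s : ℕ | (∃ b : ℕ, s = 2 ^ b) ∧ n ≤ s} :=
  stmt4_general k n hk
end

section
/- Let k ≥ 1 and n ≥ 1 be integers and suppose m = D_k(n). Then z_k(m) ≥ n and 2·z_k(m) > m. -/
def shallitV (k : ℕ) : ℕ → ℤ
  | 0 => 2
  | 1 => 4 * (k : ℤ) + 2
  | n + 2 => (4 * (k : ℤ) + 2) * shallitV k (n + 1) - shallitV k n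

lemma Urec (k n : ℕ) :
    shallitU k (n+2) = (4 * (k : ℤ) + 2) * shallitU k (n + 1) - shallitU k n := rfl

lemma Vrec (k n : ℕ) :
    shallitV k (n+2) = (4 * (k : ℤ) + 2) * shallitV k (n + 1) - shallitV k n := rfl

lemma two_step {P : ℕ → Prop} (h0 : P 0) (h1 : P 1)
    (ih : ∀ n, P n → P (n+1) → P (n+2)) : ∀ n, P n := by
  have key : ∀ n, P n ∧ P (n+1) := by
    intro n
    induction n with
    | zero => exact ⟨h0, h1⟩
    | succ n ih' => exact ⟨ih'.2, ih n ih'.1 ih'.2⟩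
  exact fun n => (key n).1

lemma U_parity (k : ℕ) : ∀ n : ℕ, (2 : ℤ) ∣ shallitU k n - n := by
  apply two_step
  · simp [shallitU]
  · simp [shallitU]
  · intro n h1 h2
    have key : shallitU k (n+2) - ((n:ℤ)+2)
        = 2*((2*(k:ℤ)+1) * shallitU k (n+1)) - (shallitU k n - n) - 2*((n:ℤ)+1) := by
      rw [Urec]; push_cast; ring
    push_cast
    rw [key]
    exact dvd_sub (dvd_sub (dvd_mul_right 2 _) h1) (dvd_mul_right 2 _)

lemma V_mod4 (k : ℕ) : ∀ n : ℕ, (4 : ℤ) ∣ shallitV k n - 2 := by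
  apply two_step
  · simp [shallitV]
  · show (4:ℤ) ∣ shallitV k 1 - 2
    rw [show shallitV k 1 = 4*(k:ℤ)+2 from rfl]
    exact ⟨k, by ring⟩
  · intro n h1 h2
    have key : shallitV k (n+2) - 2
        = ((4*(k:ℤ)+2) * (shallitV k (n+1) - 2) - (shallitV k n - 2) + 4*(2*(k:ℤ)+1)) - 4 := by
      rw [Vrec]; ring
    rw [key]
    exact dvd_sub (dvd_add (dvd_sub (h2.mul_left _) h1) (dvd_mul_right 4 _)) dvd_rfl

lemma V_odd_part (k n : ℕ) : ∃ c : ℤ, Odd c ∧ shallitV k n = 2 * c := by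
  obtain ⟨r, hr⟩ := V_mod4 k n
  exact ⟨1 + 2*r, ⟨r, by ring⟩, by linarith⟩

lemma W_inv (k : ℕ) : ∀ d : ℕ,
    shallitU k (d+1) * shallitV k d - shallitU k d * shallitV k (d+1) = 2 := by
  intro d
  induction d with
  | zero => simp [shallitU, shallitV]
  | succ d ih =>
    have hU := Urec k d
    have hV := Vrec k d
    simp only [show d+1+1 = d+2 from by omega]
    linear_combination shallitV k (d+1) * hU - shallitU k (d+1) * hV + ih

lemma X_inv (k : ℕ) : ∀ d : ℕ,
    shallitU k (d+1) * shallitV k (d+1) - shallitU k d * shallitV k (d+2)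
      = 4 * (k : ℤ) + 2 := by
  intro d
  induction d with
  | zero => simp [shallitU, shallitV, Vrec]
  | succ d ih =>
    have hU := Urec k d
    have hV := Vrec k (d+1)
    simp only [show d+1+1 = d+2 from by omega, show d+1+2 = d+3 from by omega] at hV ⊢
    linear_combination ih + shallitV k (d+2) * hU - shallitU k (d+1) * hV

lemma doubling (k : ℕ) : ∀ d : ℕ,
    shallitU k (2*d+2) = shallitU k (d+1) * shallitV k (d+1) ∧
    shallitU k (2*d+3) = shallitU k (d+1) * shallitV k (d+2) + 1 := by
  intro d
  induction d with
  | zero =>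
    refine ⟨by simp [shallitU, shallitV], ?_⟩
    show shallitU k 3 = _
    rw [show (3:ℕ) = 1+2 from rfl, Urec]
    simp [shallitU, shallitV, Vrec]
    ring
  | succ d ih =>
    obtain ⟨h0, h1⟩ := ih
    have hX := X_inv k d
    have hrec := Urec k (2*d+2)
    simp only [show 2*d+2+1 = 2*d+3 from by omega, show 2*d+2+2 = 2*(d+1)+2 from by omega] at hrec
    have hU2 := Urec k d
    have e0 : shallitU k (2*(d+1)+2) = shallitU k (d+1+1) * shallitV k (d+1+1) := by
      simp only [show d+1+1 = d+2 from by omega]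
      linear_combination hrec + (4*(k:ℤ)+2)*h1 - h0 - shallitV k (d+2) * hU2 - hX
    refine ⟨e0, ?_⟩
    have hrec2 := Urec k (2*d+3)
    simp only [show 2*d+3+1 = 2*(d+1)+2 from by omega, show 2*d+3+2 = 2*(d+1)+3 from by omega] at hrec2
    have hW := W_inv k (d+2)
    have hU3 := Urec k (d+1)
    simp only [show d+1+1 = d+2 from by omega, show d+1+2 = d+3 from by omega,
      show d+2+1 = d+3 from by omega] at hU3 hW e0 ⊢
    linear_combination hrec2 + (4*(k:ℤ)+2)*e0 - h1 - shallitV k (d+2) * hU3 + hW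

lemma even_diff (k d : ℕ) : ∀ i : ℕ,
    shallitU k (i + (2*d+2)) - shallitU k i
      = shallitU k (d+1) * shallitV k (i+d+1) := by
  apply two_step
  · simp only [show 0 + (2*d+2) = 2*d+2 from by omega, show 0+d+1 = d+1 from by omega]
    rw [show shallitU k 0 = 0 from rfl]
    linear_combination (doubling k d).1
  · simp only [show 1 + (2*d+2) = 2*d+3 from by omega, show 1+d+1 = d+2 from by omega]
    rw [show shallitU k 1 = 1 from rfl]
    linear_combination (doubling k d).2
  · intro i h0 h1
    have hrecA := Urec k (i + (2*d+2))
    have hrecB := Urec k i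
    have hrecV := Vrec k (i+d+1)
    simp only [show i+(2*d+2)+1 = i+1+(2*d+2) from by omega,
      show i+(2*d+2)+2 = i+2+(2*d+2) from by omega] at hrecA
    simp only [show i+d+1+1 = i+1+d+1 from by omega,
      show i+d+1+2 = i+2+d+1 from by omega] at hrecV
    linear_combination hrecA - hrecB - shallitU k (d+1) * hrecV + (4*(k:ℤ)+2)*h1 - h0

lemma val_claim (k : ℕ) : ∀ a : ℕ, ∀ u : ℕ, Odd u → ∀ i : ℕ,
    ∃ c : ℤ, Odd c ∧ shallitU k (i + 2^a * u) - shallitU k i = 2^a * c := by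
  intro a
  induction a with
  | zero =>
    intro u hu i
    obtain ⟨x, hx⟩ := U_parity k (i + u)
    obtain ⟨y, hy⟩ := U_parity k i
    obtain ⟨w, hw⟩ := hu
    refine ⟨shallitU k (i + 2^0*u) - shallitU k i, ?_, by ring⟩
    simp only [pow_zero, one_mul]
    have key : shallitU k (i+u) - shallitU k i = 2*(x - y + w) + 1 := by
      push_cast at hx
      have hw' : (u:ℤ) = 2*(w:ℤ)+1 := by exact_mod_cast hw
      linarith
    rw [key]
    exact odd_two_mul_add_one _
  | succ a ih =>
    intro u hu i
    have hu1 : 1 ≤ u := hu.pos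
    have hd1 : 1 ≤ 2^a * u := Nat.one_le_iff_ne_zero.mpr (by positivity)
    obtain ⟨c₁, hc₁, hUd⟩ := ih u hu 0
    obtain ⟨c₂, hc₂, hV⟩ := V_odd_part k (i + 2^a*u)
    have key := even_diff k (2^a*u - 1) i
    have hp : 2^(a+1)*u = 2*(2^a*u) := by rw [pow_succ]; ring
    have e1 : i + (2*(2^a*u-1)+2) = i + 2^(a+1)*u := by omega
    have e2 : (2^a*u-1)+1 = 2^a*u := by omega
    have e3 : i + (2^a*u-1) + 1 = i + 2^a*u := by omega
    rw [e1, e2, e3] at key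
    have hUd' : shallitU k (2^a*u) = 2^a * c₁ := by
      rw [show (0:ℕ) + 2^a*u = 2^a*u from by omega, show shallitU k 0 = 0 from rfl,
        sub_zero] at hUd
      exact hUd
    refine ⟨c₁*c₂, hc₁.mul hc₂, ?_⟩
    rw [key, hUd', hV, pow_succ]
    ring

lemma pow2_discr (k e : ℕ) : Discriminates k (2^e) (2^e) := by
  have main : ∀ i j : ℕ, i < j → j < i + 2^e →
      ¬ (shallitU k i ≡ shallitU k j [ZMOD ((2^e : ℕ) : ℤ)]) := by
    intro i j hij hje hcong
    have hdvd : ((2^e : ℕ) : ℤ) ∣ shallitU k j - shallitU k i := Int.ModEq.dvd hcong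
    have ht0 : j - i ≠ 0 := by omega
    obtain ⟨a, u, hu, htu⟩ := Nat.exists_eq_two_pow_mul_odd ht0
    have hle : 2^a ≤ 2^a * u := Nat.le_mul_of_pos_right _ hu.pos
    have hae : a < e := by
      have h2 : 2^a < 2^e := by omega
      exact (Nat.pow_lt_pow_iff_right (by norm_num)).mp h2
    obtain ⟨c, hc, hceq⟩ := val_claim k a u hu i
    rw [show i + 2^a * u = j from by omega] at hceq
    rw [hceq] at hdvd
    have h2e : ((2:ℤ))^(a+1) ∣ (2:ℤ)^a * c := by
      refine dvd_trans (pow_dvd_pow 2 hae) ?_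
      simpa using hdvd
    rw [pow_succ] at h2e
    have hdc : (2:ℤ) ∣ c := by
      have hne : ((2:ℤ))^a ≠ 0 := by positivity
      exact (mul_dvd_mul_iff_left hne).mp h2e
    obtain ⟨c', rfl⟩ := hdc
    obtain ⟨w, hw⟩ := hc
    omega
  intro i j hi hj hcong
  by_contra hne
  rcases Nat.lt_or_ge i j with h | h
  · exact main i j h (by omega) hcong
  · have h' : j < i := by omega
    exact main j i h' (by omega) hcong.symm

lemma z_exists (k m : ℕ) (hm : 0 < m) :
    ∃ s : ℕ, 0 < s ∧ (m : ℤ) ∣ shallitU k s := by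
  haveI : NeZero m := ⟨hm.ne'⟩
  set f : ℕ → ZMod m × ZMod m :=
    fun i => (((shallitU k i : ℤ) : ZMod m), ((shallitU k (i+1) : ℤ) : ZMod m)) with hf
  have back : ∀ i j : ℕ, f (i+1) = f (j+1) → f i = f j := by
    intro i j h
    have h1 : ((shallitU k (i+1) : ℤ) : ZMod m) = ((shallitU k (j+1) : ℤ) : ZMod m) :=
      congrArg Prod.fst h
    have h2 : ((shallitU k (i+2) : ℤ) : ZMod m) = ((shallitU k (j+2) : ℤ) : ZMod m) :=
      congrArg Prod.snd h
    have hUi : shallitU k i = (4*(k:ℤ)+2) * shallitU k (i+1) - shallitU k (i+2) := by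
      rw [Urec]; ring
    have hUj : shallitU k j = (4*(k:ℤ)+2) * shallitU k (j+1) - shallitU k (j+2) := by
      rw [Urec]; ring
    have hfst : ((shallitU k i : ℤ) : ZMod m) = ((shallitU k j : ℤ) : ZMod m) := by
      rw [hUi, hUj]; push_cast; rw [h1, h2]
    exact Prod.ext hfst h1
  have shift : ∀ t a b : ℕ, f (a+t) = f (b+t) → f a = f b := by
    intro t
    induction t with
    | zero => intro a b h; simpa using h
    | succ t ih =>
      intro a b h
      rw [show a + (t+1) = (a+t)+1 from by omega, show b + (t+1) = (b+t)+1 from by omega] at h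
      exact ih a b (back _ _ h)
  obtain ⟨x, y, hxy, hfeq⟩ := Finite.exists_ne_map_eq_of_infinite f
  have main : ∀ x y : ℕ, x < y → f x = f y → ∃ s : ℕ, 0 < s ∧ (m : ℤ) ∣ shallitU k s := by
    intro x y hlt hfeq
    refine ⟨y - x, by omega, ?_⟩
    have hshift : f 0 = f (y - x) := by
      apply shift x
      rw [show 0 + x = x from by omega, show y - x + x = y from by omega]
      exact hfeq
    have h0 : ((shallitU k (y-x) : ℤ) : ZMod m) = 0 := by
      have := congrArg Prod.fst hshift
      simp only [hf] at this
      rw [← this, show shallitU k 0 = 0 from rfl]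
      simp
    exact (ZMod.intCast_zmod_eq_zero_iff_dvd _ m).mp h0
  rcases Nat.lt_or_ge x y with hlt | hge
  · exact main x y hlt hfeq
  · exact main y x (by omega) hfeq.symm


theorem stmt9 (k n : ℕ) (hk : 1 ≤ k) (hn : 1 ≤ n) (m : ℕ)
    (hm : m = shallitD k n) :
    n ≤ shallitZ k m ∧ m < 2 * shallitZ k m := by
  rw [shallitD] at hm
  obtain ⟨e, hne, he2n⟩ : ∃ e : ℕ, n ≤ 2^e ∧ 2^e < 2*n := by
    rcases Nat.lt_or_ge n 2 with h2 | h2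
    · exact ⟨0, by omega, by omega⟩
    · refine ⟨Nat.log 2 (n-1) + 1, ?_, ?_⟩
      · have := Nat.lt_pow_succ_log_self (by norm_num : 1 < 2) (n-1)
        omega
      · have := Nat.pow_log_le_self 2 (show n - 1 ≠ 0 by omega)
        rw [pow_succ]
        omega
  have hdisc2 : Discriminates k (2^e) n := by
    intro i j hi hj hc
    exact pow2_discr k e i j (by omega) (by omega) hc
  have hSmem : 2^e ∈ {m : ℕ | 0 < m ∧ Discriminates k m n} := ⟨by positivity, hdisc2⟩
  have hmmem : m ∈ {m : ℕ | 0 < m ∧ Discriminates k m n} := by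
    rw [hm]; exact Nat.sInf_mem ⟨_, hSmem⟩
  have hmle : m ≤ 2^e := by rw [hm]; exact Nat.sInf_le hSmem
  obtain ⟨hm0, hmd⟩ := hmmem
  obtain ⟨s, hs0, hsd⟩ := z_exists k m hm0
  have hzmem : shallitZ k m ∈ {t : ℕ | 0 < t ∧ (m : ℤ) ∣ shallitU k t} := by
    rw [shallitZ]; exact Nat.sInf_mem ⟨s, hs0, hsd⟩
  obtain ⟨hz0, hzd⟩ := hzmem
  have hnz : n ≤ shallitZ k m := by
    by_contra hlt
    push_neg at hlt
    have hc : shallitU k 0 ≡ shallitU k (shallitZ k m) [ZMOD (m : ℤ)] := by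
      rw [show shallitU k 0 = 0 from rfl]
      exact (Int.modEq_zero_iff_dvd.mpr hzd).symm
    have := hmd 0 (shallitZ k m) (by omega) hlt hc
    omega
  exact ⟨hnz, by omega⟩
end

section
/- Let k ≥ 1 be an integer, let p be a prime not dividing k(k+1), and let b ≥ 1 be an integer. Then z_k(p^b) divides p^(b−1)·(p − e_p(k))/2. Moreover, if p ≡ 3 (mod 4), the Legendre symbol of k+1 modulo p equals 1, and the Legendre symbol of k modulo p equals −1, then z_k(p^b) divides p^(b−1)·(p+1)/4. -/
/-!
Modulo `N` the sequence lives in `R_N = (ℤ/N)[α]`, `α² = (4k+2)α - 1`: there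
`αⁿ = U_n α - U_{n-1}` and `αⁿ - α⁻ⁿ = U_n (α - α⁻¹)`. The square of `α - α⁻¹ = 2α - (4k+2)`
is the discriminant `16k(k+1)`; when it is a unit, `N ∣ U_n ↔ α²ⁿ = 1`, so `z_k(N)` is the
order of `α²`.

For `N = p`, Euler's criterion applied to `2α - (4k+2)` and the Frobenius give `α^p = α` or
`α^p = α⁻¹` according to `e_p(k) = ±1`, i.e. `α^(p - e_p(k)) = 1`. Under the extra
hypotheses, `α = (√(k+1) + √k)²` with `√(k+1) ∈ 𝔽_p` while the Frobenius negates `√k`, so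
already `α^((p+1)/2) = 1`. Finally `αᵐ ≡ 1 (mod p)` lifts to `α^(m p^(b-1)) ≡ 1 (mod p^b)`.
-/

open Polynomial

namespace AdjoinRoot

variable {A : Type*} [CommRing A] (c : A)

theorem monic_X_sq_sub_C_mul_X_add_one : (X ^ 2 - C c * X + 1 : A[X]).Monic := by
  monicity!

theorem of_add_of_mul_root_eq_zero_iff (a b : A) :
    of (X ^ 2 - C c * X + 1) a + of _ b * root _ = 0 ↔ a = 0 ∧ b = 0 := by
  refine ⟨fun h => ?_, by rintro ⟨rfl, rfl⟩; simp⟩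
  cases subsingleton_or_nontrivial A
  · exact ⟨Subsingleton.elim _ _, Subsingleton.elim _ _⟩
  have hmk : mk (X ^ 2 - C c * X + 1) (C a + C b * X) = 0 := by simpa using h
  have hdeg : (C a + C b * X).degree < (X ^ 2 - C c * X + 1 : A[X]).degree := by
    rw [show (X ^ 2 - C c * X + 1 : A[X]).degree = 2 by compute_degree!]
    compute_degree!
  have hf := monic_X_sq_sub_C_mul_X_add_one c
  have := modByMonicHom_mk hf (C a + C b * X)
  rw [hmk, map_zero, (modByMonic_eq_self_iff hf).2 hdeg] at this
  have h0 := congrArg (coeff · 0) this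
  have h1 := congrArg (coeff · 1) this
  simp only [coeff_zero, coeff_add, coeff_C_zero, mul_coeff_zero, coeff_X_zero, mul_zero,
    add_zero, coeff_C_succ, coeff_mul_X, zero_add] at h0 h1
  exact ⟨h0.symm, h1.symm⟩

end AdjoinRoot

section Recurrence

variable {R : Type*} [CommRing R] {k : ℕ}

theorem pow_succ_eq_shallitU {x : R} (hx : x ^ 2 = (4 * k + 2) * x - 1) :
    ∀ n, x ^ (n + 1) = shallitU k (n + 1) * x - shallitU k n
  | 0 => by simp [shallitU]
  | n + 1 => by
    rw [pow_succ, pow_succ_eq_shallitU hx n, shallitU]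
    push_cast
    linear_combination (shallitU k (n + 1) : R) * hx

theorem pow_sub_pow_eq_shallitU_mul {x y : R} (hsum : x + y = 4 * k + 2) (hprod : x * y = 1) :
    ∀ n, x ^ n - y ^ n = shallitU k n * (x - y)
  | 0 => by simp [shallitU]
  | 1 => by simp [shallitU]
  | n + 2 => by
    rw [shallitU]
    push_cast
    linear_combination (x + y) * pow_sub_pow_eq_shallitU_mul hsum hprod (n + 1) -
      pow_sub_pow_eq_shallitU_mul hsum hprod n + shallitU k (n + 1) * (x - y) * hsum -
      (x ^ n - y ^ n) * hprod

end Recurrence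

abbrev ShallitRing (k N : ℕ) : Type :=
  AdjoinRoot (X ^ 2 - C (4 * k + 2 : ZMod N) * X + 1)

namespace ShallitRing

variable (k N : ℕ)

noncomputable abbrev root : ShallitRing k N := AdjoinRoot.root _

theorem root_sq : root k N ^ 2 = (4 * k + 2) * root k N - 1 := by
  have h := AdjoinRoot.eval₂_root (X ^ 2 - C (4 * k + 2 : ZMod N) * X + 1)
  simp only [eval₂_add, eval₂_sub, eval₂_mul, eval₂_X_pow, eval₂_C, eval₂_X, eval₂_one] at h
  simp only [map_add, map_mul, map_ofNat, map_natCast] at h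
  linear_combination h

noncomputable def rootUnit : (ShallitRing k N)ˣ where
  val := root k N
  inv := 4 * k + 2 - root k N
  val_inv := by linear_combination -root_sq k N
  inv_val := by linear_combination -root_sq k N

theorem two_mul_root_sub_sq : (2 * root k N - (4 * k + 2)) ^ 2 = 16 * k * (k + 1) := by
  linear_combination 4 * root_sq k N

instance : CharP (ShallitRing k N) N := by
  refine charP_of_injective_algebraMap (R := ZMod N) (fun a b hab => ?_) N
  rw [← sub_eq_zero, ← map_sub] at hab
  have h := (AdjoinRoot.of_add_of_mul_root_eq_zero_iff _ (a - b) 0).1 (by simpa using hab)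
  exact sub_eq_zero.1 h.1

variable {k N}

theorem intCast_mul_root_add_intCast_eq_zero_iff (a b : ℤ) :
    (a : ShallitRing k N) * root k N + b = 0 ↔ (N : ℤ) ∣ a ∧ (N : ℤ) ∣ b := by
  rw [← ZMod.intCast_zmod_eq_zero_iff_dvd, ← ZMod.intCast_zmod_eq_zero_iff_dvd, and_comm,
    ← AdjoinRoot.of_add_of_mul_root_eq_zero_iff (4 * k + 2 : ZMod N), add_comm]
  simp

theorem intCast_eq_zero_iff (a : ℤ) : (a : ShallitRing k N) = 0 ↔ (N : ℤ) ∣ a := by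
  simpa using intCast_mul_root_add_intCast_eq_zero_iff (k := k) (N := N) 0 a

theorem root_pow_succ_eq_one_iff (n : ℕ) :
    root k N ^ (n + 1) = 1 ↔ (N : ℤ) ∣ shallitU k (n + 1) ∧ (N : ℤ) ∣ shallitU k n + 1 := by
  rw [← sub_eq_zero, pow_succ_eq_shallitU (root_sq k N), ← dvd_neg (b := shallitU k n + 1),
    ← intCast_mul_root_add_intCast_eq_zero_iff]
  push_cast
  ring_nf

theorem isUnit_two_mul_root_sub (hN : N.Coprime (16 * k * (k + 1))) :
    IsUnit (2 * root k N - (4 * k + 2)) := by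
  have h := ((ZMod.isUnit_iff_coprime _ N).2 hN.symm).map
    (algebraMap (ZMod N) (ShallitRing k N))
  rw [map_natCast] at h
  push_cast at h
  rw [← two_mul_root_sub_sq] at h
  exact (isUnit_pow_iff two_ne_zero).1 h

theorem dvd_shallitU_iff (hN : N.Coprime (16 * k * (k + 1))) (n : ℕ) :
    (N : ℤ) ∣ shallitU k n ↔ (rootUnit k N ^ 2) ^ n = 1 := by
  have hdiff := pow_sub_pow_eq_shallitU_mul (k := k) (x := root k N) (y := 4 * k + 2 - root k N)
    (by ring) (rootUnit k N).val_inv n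
  rw [← intCast_eq_zero_iff, ← (isUnit_two_mul_root_sub hN).mul_left_eq_zero,
    show 2 * root k N - (4 * k + 2) = root k N - (4 * k + 2 - root k N) by ring, ← hdiff,
    sub_eq_zero, ← pow_mul, mul_comm 2 n, pow_mul, sq (rootUnit k N ^ n),
    ← eq_inv_iff_mul_eq_one, ← inv_pow, Units.ext_iff]
  rfl

theorem shallitZ_dvd_iff (hN : N.Coprime (16 * k * (k + 1))) (n : ℕ) :
    shallitZ k N ∣ n ↔ root k N ^ (2 * n) = 1 := by
  have hz : shallitZ k N = orderOf (rootUnit k N ^ 2) := by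
    rw [orderOf, Function.minimalPeriod_eq_sInf_n_pos_IsPeriodicPt, shallitZ]
    simp_rw [isPeriodicPt_mul_iff_pow_eq_one, ← dvd_shallitU_iff hN]
  rw [hz, orderOf_dvd_iff_pow_eq_one, ← pow_mul, Units.ext_iff, Units.val_pow_eq_pow_val]
  rfl

theorem root_pow_mul_pow_eq_one {p n : ℕ} (h : root k p ^ n = 1) (c : ℕ) :
    root k (p ^ (c + 1)) ^ (n * p ^ c) = 1 := by
  cases n with
  | zero => simp
  | succ n =>
    obtain ⟨⟨a, ha⟩, ⟨b, hb⟩⟩ := (root_pow_succ_eq_one_iff n).1 h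
    have hdvd : (p : ShallitRing k (p ^ (c + 1))) ∣ root k _ ^ (n + 1) - 1 := by
      refine ⟨a * root k (p ^ (c + 1)) - b, ?_⟩
      rw [pow_succ_eq_shallitU (root_sq _ _), ha, eq_sub_of_add_eq hb]
      push_cast
      ring
    have hchar : (p : ShallitRing k (p ^ (c + 1))) ^ (c + 1) = 0 :=
      mod_cast CharP.cast_eq_zero (ShallitRing k (p ^ (c + 1))) (p ^ (c + 1))
    have h' := dvd_sub_pow_of_dvd_sub hdvd c
    rwa [one_pow, ← pow_mul, hchar, zero_dvd_iff, sub_eq_zero] at h'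

end ShallitRing

section CharP

variable {R : Type*} [CommRing R] {p : ℕ} [CharP R p]

theorem CharP.isUnit_two_of_odd (hp : Odd p) : IsUnit (2 : R) := by
  let := invertibleOfCoprime (R := R) (Nat.coprime_two_left.2 hp)
  simpa using isUnit_of_invertible ((2 : ℕ) : R)

theorem pow_char_eq_legendreSym_mul [Fact p.Prime] (hp : p ≠ 2) {x : R} {a : ℤ}
    (hx : x ^ 2 = a) : x ^ p = legendreSym p a * x := by
  have hp' : p = 2 * (p / 2) + 1 :=
    (Nat.two_mul_div_two_add_one_of_odd (Nat.Prime.odd_of_ne_two Fact.out hp)).symm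
  rw [← map_intCast (ZMod.castHom (dvd_refl p) R), legendreSym.eq_pow, map_pow, map_intCast,
    ← hx, ← pow_mul, ← pow_succ, ← hp']

end CharP

theorem legendreSym_sixteen_mul (p : ℕ) [Fact p.Prime] (hp : p ≠ 2) (a : ℤ) :
    legendreSym p (16 * a) = legendreSym p a := by
  have h4 : ((4 : ℤ) : ZMod p) ≠ 0 := by
    rw [Ne, ZMod.intCast_zmod_eq_zero_iff_dvd]
    intro h
    have h2 : p ∣ 2 ^ 2 := by exact_mod_cast h
    exact hp ((Nat.prime_dvd_prime_iff_eq Fact.out Nat.prime_two).1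
      (Nat.Prime.dvd_of_dvd_pow Fact.out h2))
  rw [show (16 : ℤ) = 4 ^ 2 by norm_num, legendreSym.mul, legendreSym.sq_one' p h4, one_mul]

namespace ShallitRing

variable {k p : ℕ} [Fact p.Prime]

theorem two_mul_root_pow_char (hp : p ≠ 2) :
    2 * root k p ^ p - (4 * k + 2) =
      legendreSym p (k * (k + 1)) * (2 * root k p - (4 * k + 2)) := by
  have hsq : (2 * root k p - (4 * k + 2)) ^ 2 = ((16 * (k * (k + 1)) : ℤ) : ShallitRing k p) := by
    push_cast
    linear_combination two_mul_root_sub_sq k p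
  have h := pow_char_eq_legendreSym_mul hp hsq
  rw [legendreSym_sixteen_mul p hp, ← frobenius_def] at h
  simpa only [map_sub, map_mul, map_add, map_ofNat, map_natCast, frobenius_def] using h

theorem root_pow_char_eq_root (hp : p ≠ 2) (he : legendreSym p (k * (k + 1)) = 1) :
    root k p ^ p = root k p := by
  have h := two_mul_root_pow_char (k := k) hp
  rw [he, Int.cast_one, one_mul, sub_left_inj] at h
  exact (CharP.isUnit_two_of_odd (Nat.Prime.odd_of_ne_two Fact.out hp)).mul_left_cancel h

theorem root_pow_char_eq_inv (hp : p ≠ 2) (he : legendreSym p (k * (k + 1)) = -1) :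
    root k p ^ p = 4 * k + 2 - root k p := by
  have h := two_mul_root_pow_char (k := k) hp
  rw [he] at h
  refine (CharP.isUnit_two_of_odd (Nat.Prime.odd_of_ne_two Fact.out hp)).mul_left_cancel ?_
  push_cast at h
  linear_combination h

theorem exists_two_mul_eq_sub_legendreSym (hp : p ≠ 2) (hpk : ¬ p ∣ k * (k + 1)) :
    ∃ m : ℕ, 2 * (m : ℤ) = p - legendreSym p (k * (k + 1)) ∧ root k p ^ (2 * m) = 1 := by
  have hodd : 2 * (p / 2) + 1 = p :=
    Nat.two_mul_div_two_add_one_of_odd (Nat.Prime.odd_of_ne_two Fact.out hp)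
  have hne : ((k * (k + 1) : ℤ) : ZMod p) ≠ 0 := by
    rw [Ne, ZMod.intCast_zmod_eq_zero_iff_dvd]
    exact_mod_cast hpk
  rcases legendreSym.eq_one_or_neg_one p hne with he | he
  · refine ⟨p / 2, by rw [he]; omega, (rootUnit k p).isUnit.mul_left_cancel ?_⟩
    change root k p * _ = root k p * 1
    rw [mul_one, ← pow_succ', hodd]
    exact root_pow_char_eq_root hp he
  · refine ⟨p / 2 + 1, by rw [he]; omega, ?_⟩
    rw [show 2 * (p / 2 + 1) = p + 1 by omega, pow_succ, root_pow_char_eq_inv hp he]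
    exact (rootUnit k p).inv_val

theorem root_pow_half_eq_one (hp : p ≠ 2) (hk1 : legendreSym p (k + 1) = 1)
    (hk : legendreSym p k = -1) : root k p ^ ((p + 1) / 2) = 1 := by
  have hodd := Nat.Prime.odd_of_ne_two Fact.out hp
  have hk1' : ((k + 1 : ℤ) : ZMod p) ≠ 0 := by
    rw [Ne, ← legendreSym.eq_zero_iff, hk1]
    exact one_ne_zero
  obtain ⟨s, hs⟩ := (legendreSym.eq_one_iff p hk1').1 hk1
  have hs2 : 2 * s ≠ 0 := by
    refine mul_ne_zero (CharP.isUnit_two_of_odd hodd).ne_zero fun h0 => hk1' ?_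
    rw [hs, h0, mul_zero]
  let ι := algebraMap (ZMod p) (ShallitRing k p)
  set σ := ι s
  set τ := ι (2 * s)⁻¹
  have hστ : 2 * σ * τ = 1 := by
    rw [← map_ofNat ι, ← map_mul, ← map_mul, mul_inv_cancel₀ hs2, map_one]
  have hσ : σ ^ 2 = k + 1 := by
    rw [sq, ← map_mul, ← hs]; simp [ι]
  -- `σ = √(k+1)` and `r = √k`, normalised so that `(σ + r)² = α`
  set r := (root k p - (2 * k + 1)) * τ
  have hr : r ^ 2 = k := by
    linear_combination τ ^ 2 * root_sq k p - 4 * k * τ ^ 2 * hσ + k * (2 * σ * τ + 1) * hστ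
  have hroot : (σ + r) ^ 2 = root k p := by
    linear_combination hσ + hr + (root k p - (2 * k + 1)) * hστ
  have hσp : σ ^ p = σ := by rw [← map_pow, ZMod.pow_card]
  have hrp : r ^ p = -r := by
    rw [pow_char_eq_legendreSym_mul hp (a := k) (by rw [Int.cast_natCast, hr]), hk]
    push_cast
    ring
  rw [← hroot, ← pow_mul, Nat.two_mul_div_two_of_even hodd.add_one, pow_succ, add_pow_char,
    hσp, hrp]
  linear_combination hσ - hr

end ShallitRing

open ShallitRing in
theorem stmt10_general (k : ℕ) (p : ℕ) (hp : p.Prime)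
    (hpk : ¬ p ∣ k * (k + 1)) (b : ℕ) (hb : 1 ≤ b) :
    ((2 * shallitZ k (p ^ b) : ℕ) : ℤ) ∣
        (p : ℤ) ^ (b - 1) * ((p : ℤ) - @legendreSym p ⟨hp⟩ ((k : ℤ) * ((k : ℤ) + 1))) ∧
    (p % 4 = 3 → @legendreSym p ⟨hp⟩ ((k : ℤ) + 1) = 1 →
      @legendreSym p ⟨hp⟩ (k : ℤ) = -1 →
      4 * shallitZ k (p ^ b) ∣ p ^ (b - 1) * (p + 1)) := by
  have := Fact.mk hp
  have hp2 : p ≠ 2 := by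
    rintro rfl
    exact hpk (Nat.even_mul_succ_self k).two_dvd
  obtain ⟨c, rfl⟩ : ∃ c, b = c + 1 := ⟨b - 1, by omega⟩
  have hcop : (p ^ (c + 1)).Coprime (16 * k * (k + 1)) := by
    refine Nat.Coprime.pow_left _ ?_
    rw [show 16 * k * (k + 1) = 2 ^ 4 * (k * (k + 1)) by ring]
    exact Nat.Coprime.mul_right (((Nat.coprime_primes hp Nat.prime_two).2 hp2).pow_right 4)
      ((Nat.Prime.coprime_iff_not_dvd hp).2 hpk)
  have hz (m : ℕ) (hm : root k p ^ (2 * m) = 1) : shallitZ k (p ^ (c + 1)) ∣ m * p ^ c :=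
    (shallitZ_dvd_iff hcop _).2 (by rw [← mul_assoc]; exact root_pow_mul_pow_eq_one hm c)
  rw [Nat.add_sub_cancel]
  refine ⟨?_, fun hp4 hk1 hk => ?_⟩
  · obtain ⟨m, hm, hroot⟩ := exists_two_mul_eq_sub_legendreSym hp2 hpk
    rw [← hm, mul_left_comm, mul_comm _ (m : ℤ)]
    exact_mod_cast mul_dvd_mul_left 2 (hz m hroot)
  · have hroot := root_pow_half_eq_one hp2 hk1 hk
    rw [show (p + 1) / 2 = 2 * ((p + 1) / 4) by omega] at hroot
    have h4 : p + 1 = 4 * ((p + 1) / 4) := by omega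
    rw [h4, mul_left_comm, mul_comm _ ((p + 1) / 4)]
    exact mul_dvd_mul_left 4 (hz _ hroot)

theorem stmt10 (k : ℕ) (hk : 1 ≤ k) (p : ℕ) (hp : p.Prime)
    (hpk : ¬ p ∣ k * (k + 1)) (b : ℕ) (hb : 1 ≤ b) :
    ((2 * shallitZ k (p ^ b) : ℕ) : ℤ) ∣
        (p : ℤ) ^ (b - 1) * ((p : ℤ) - @legendreSym p ⟨hp⟩ ((k : ℤ) * ((k : ℤ) + 1))) ∧
    (p % 4 = 3 → @legendreSym p ⟨hp⟩ ((k : ℤ) + 1) = 1 →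
      @legendreSym p ⟨hp⟩ (k : ℤ) = -1 →
      4 * shallitZ k (p ^ b) ∣ p ^ (b - 1) * (p + 1)) :=
  stmt10_general k p hp hpk b hb
end

section
/- Let p ≥ 5 be a prime and set f = φ((p+1)/2), where φ is Euler's totient function. Then the number of integers k with 1 ≤ k ≤ p such that z_k(p) = (p+1)/2 equals f, and the number of integers k with 1 ≤ k ≤ p such that p ∤ k(k+1) and z_k(p) < (p+1)/2 equals p − f − 2. (The value z_k(p) depends only on the residue class of k modulo p, so these counts are counts of residue classes.) -/
/-!
Put `s = 4k + 2`, so that `U(k)` is the Lucas sequence `U_{n+2} = s U_{n+1} - U_n`. Over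
`F = 𝔽_{p²}` write `s = a + a⁻¹`; when `s ≠ ±2` Binet's formula `(a - a⁻¹) U_n = aⁿ - a⁻ⁿ`
gives `z_k(p) = ord(a²)`. The Frobenius maps `a` to `a` or `a⁻¹`, so `ord(a²)` divides
`(p - 1)/2` or `(p + 1)/2`; in particular `z_k(p) ≤ (p + 1)/2`. Conversely every `a` with
`ord(a²) = m := (p + 1)/2` satisfies `aᵖ = a⁻¹`, so `a + a⁻¹` lies in `𝔽_p`. Hence
`a ↦ a + a⁻¹` is two-to-one from `{a | ord(a²) = m}` onto `{s | z = m}`, and squaring is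
two-to-one from the former set onto the `φ(m)` elements of order `m` of the cyclic group `Fˣ`.
The parameters `s = ±2` (that is, `p ∣ k(k + 1)`) have `z = p`.
-/

open Finset

section LucasU

variable {R S : Type*} [CommRing R] [CommRing S]

def lucasU (s : R) : ℕ → R
  | 0 => 0
  | 1 => 1
  | n + 2 => s * lucasU s (n + 1) - lucasU s n

@[simp] lemma lucasU_zero (s : R) : lucasU s 0 = 0 := rfl

@[simp] lemma lucasU_one (s : R) : lucasU s 1 = 1 := rfl

lemma lucasU_add_two (s : R) (n : ℕ) :
    lucasU s (n + 2) = s * lucasU s (n + 1) - lucasU s n := rfl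

lemma map_lucasU (f : R →+* S) (s : R) (n : ℕ) : f (lucasU s n) = lucasU (f s) n := by
  induction n using Nat.twoStepInduction with
  | zero => simp
  | one => simp
  | more n ih₀ ih₁ => simp [lucasU_add_two, ih₀, ih₁]

lemma shallitU_eq_lucasU (k n : ℕ) : shallitU k n = lucasU (4 * k + 2 : ℤ) n := by
  induction n using Nat.twoStepInduction with
  | zero => rfl
  | one => rfl
  | more n ih₀ ih₁ => rw [shallitU, lucasU_add_two, ih₀, ih₁]

lemma sub_inv_mul_lucasU_add_inv (a : Rˣ) (n : ℕ) :
    ((a : R) - ↑a⁻¹) * lucasU (↑a + ↑a⁻¹ : R) n = ↑a ^ n - ↑a⁻¹ ^ n := by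
  induction n using Nat.twoStepInduction with
  | zero => simp
  | one => simp
  | more n ih₀ ih₁ =>
    rw [lucasU_add_two]
    linear_combination (↑a + ↑a⁻¹ : R) * ih₁ - ih₀ + (↑a ^ n - ↑a⁻¹ ^ n : R) * a.mul_inv

lemma pow_succ_mul_lucasU_two_mul {r : R} (hr : r ^ 2 = 1) (n : ℕ) :
    r ^ (n + 1) * lucasU (2 * r) n = n := by
  induction n using Nat.twoStepInduction with
  | zero => simp
  | one => simpa using hr
  | more n ih₀ ih₁ =>
    rw [lucasU_add_two]
    push_cast at ih₁ ⊢
    linear_combination (2 * r ^ 2) * ih₁ - r ^ 2 * ih₀ + (n + 2 : R) * hr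

end LucasU

lemma Units.eq_or_eq_inv_of_add_inv_eq {K : Type*} [Field K] {a b : Kˣ}
    (h : (b : K) + ↑b⁻¹ = ↑a + ↑a⁻¹) : b = a ∨ b = a⁻¹ := by
  have key : ((b : K) - a) * (b - ↑a⁻¹) = 0 := by
    linear_combination (b : K) * h + a.mul_inv - b.mul_inv
  rcases mul_eq_zero.mp key with h' | h'
  · exact .inl (Units.ext (sub_eq_zero.mp h'))
  · exact .inr (Units.ext (sub_eq_zero.mp h'))

lemma Units.add_inv_sq_eq_four_iff {K : Type*} [Field K] {a : Kˣ} :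
    ((a : K) + ↑a⁻¹) ^ 2 = 4 ↔ a ^ 2 = 1 := by
  have key : ((a : K) + ↑a⁻¹) ^ 2 - 4 = (a - ↑a⁻¹) ^ 2 := by
    linear_combination (4 : K) * a.mul_inv
  rw [← sub_eq_zero, key, sq_eq_zero_iff, sub_eq_zero, ← Units.ext_iff, eq_inv_iff_mul_eq_one, sq]

lemma Nat.sInf_setOf_pos_and_dvd (d : ℕ) : sInf {n | 0 < n ∧ d ∣ n} = d := by
  rcases Nat.eq_zero_or_pos d with rfl | hd
  · simp [pos_iff_ne_zero]
  · exact le_antisymm (Nat.sInf_le ⟨hd, dvd_rfl⟩)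
      (le_csInf ⟨d, hd, dvd_rfl⟩ fun n hn => Nat.le_of_dvd hn.1 hn.2)

section AppearanceIndex

variable {R S : Type*} [CommRing R] [CommRing S]

/-- `0` when no term of positive index vanishes. -/
noncomputable def appearanceIndex (s : R) : ℕ :=
  sInf {n | 0 < n ∧ lucasU s n = 0}

lemma appearanceIndex_map {f : R →+* S} (hf : Function.Injective f) (s : R) :
    appearanceIndex (f s) = appearanceIndex s := by
  simp only [appearanceIndex, ← map_lucasU, map_eq_zero_iff f hf]

lemma shallitZ_eq_appearanceIndex (k m : ℕ) :
    shallitZ k m = appearanceIndex (4 * k + 2 : ZMod m) := by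
  simp only [shallitZ, appearanceIndex, shallitU_eq_lucasU, ← ZMod.intCast_zmod_eq_zero_iff_dvd,
    ← eq_intCast (Int.castRingHom (ZMod m)), map_lucasU]
  simp

lemma appearanceIndex_two_mul (p : ℕ) [CharP R p] {r : R} (hr : r ^ 2 = 1) :
    appearanceIndex (2 * r) = p := by
  have hu : IsUnit r := IsUnit.of_pow_eq_one hr two_ne_zero
  have key (n : ℕ) : lucasU (2 * r) n = 0 ↔ p ∣ n := by
    rw [← CharP.cast_eq_zero_iff R p, ← pow_succ_mul_lucasU_two_mul hr,
      (hu.pow (n + 1)).mul_right_eq_zero]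
  simp only [appearanceIndex, key, Nat.sInf_setOf_pos_and_dvd]

lemma appearanceIndex_of_sq_eq_four [IsDomain R] (p : ℕ) [CharP R p] {s : R} (hs : s ^ 2 = 4) :
    appearanceIndex s = p := by
  have : s = 2 * 1 ∨ s = 2 * (-1) := by
    simpa using sq_eq_sq_iff_eq_or_eq_neg.mp (hs.trans (by norm_num : (4 : R) = 2 ^ 2))
  rcases this with rfl | rfl <;> exact appearanceIndex_two_mul p (by norm_num)

lemma appearanceIndex_add_inv {K : Type*} [Field K] {a : Kˣ} (ha : a ^ 2 ≠ 1) :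
    appearanceIndex (↑a + ↑a⁻¹ : K) = orderOf (a ^ 2) := by
  have hsub : (a : K) - ↑a⁻¹ ≠ 0 := by
    rwa [Ne, sub_eq_zero, ← Units.ext_iff, eq_inv_iff_mul_eq_one, ← sq]
  have key (n : ℕ) : lucasU (↑a + ↑a⁻¹ : K) n = 0 ↔ orderOf (a ^ 2) ∣ n := by
    rw [orderOf_dvd_iff_pow_eq_one, ← mul_right_inj' hsub, mul_zero, sub_inv_mul_lucasU_add_inv,
      sub_eq_zero, ← Units.val_pow_eq_pow_val, ← Units.val_pow_eq_pow_val, ← Units.ext_iff,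
      inv_pow, eq_inv_iff_mul_eq_one, ← pow_add, ← two_mul, pow_mul]
  simp only [appearanceIndex, key, Nat.sInf_setOf_pos_and_dvd]

end AppearanceIndex

section ZModOdd

variable {p : ℕ} [Fact p.Prime]

lemma ZMod.two_ne_zero_of_ne_two (hp2 : p ≠ 2) : (2 : ZMod p) ≠ 0 :=
  Ring.two_ne_zero (by rwa [ZMod.ringChar_zmod_n])

lemma ZMod.card_sq_ne_four (hp2 : p ≠ 2) : #{s : ZMod p | s ^ 2 ≠ 4} = p - 2 := by
  classical
  have h2 : (2 : ZMod p) ≠ -2 :=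
    ZMod.ne_neg_self ((Fact.out : p.Prime).odd_of_ne_two hp2) (ZMod.two_ne_zero_of_ne_two hp2)
  have hroots : ({s : ZMod p | s ^ 2 = 4} : Finset (ZMod p)) = {2, -2} := by
    ext s
    simp [← sq_eq_sq_iff_eq_or_eq_neg, show (4 : ZMod p) = 2 ^ 2 by norm_num]
  rw [filter_not, card_sdiff_of_subset (filter_subset _ _), hroots, card_pair h2, card_univ,
    ZMod.card]

lemma dvd_mul_succ_iff_sq_eq_four (hp2 : p ≠ 2) (k : ℕ) :
    p ∣ k * (k + 1) ↔ (4 * (k : ZMod p) + 2) ^ 2 = 4 := by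
  have h16 : (16 : ZMod p) ≠ 0 := by
    rw [show (16 : ZMod p) = 2 ^ 4 by norm_num]
    exact pow_ne_zero 4 (ZMod.two_ne_zero_of_ne_two hp2)
  rw [← ZMod.natCast_eq_zero_iff, ← sub_eq_zero (a := (4 * (k : ZMod p) + 2) ^ 2),
    show (4 * (k : ZMod p) + 2) ^ 2 - 4 = 16 * ((k * (k + 1) : ℕ) : ZMod p) by push_cast; ring,
    mul_eq_zero, or_iff_right h16]

end ZModOdd

lemma ZMod.ncard_setOf_natCast (n : ℕ) [NeZero n] (P : ZMod n → Prop) [DecidablePred P] :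
    {k : ℕ | 1 ≤ k ∧ k ≤ n ∧ P k}.ncard = #{x | P x} := by
  have hinv {k : ℕ} (hk : 1 ≤ k) (hkn : k ≤ n) : ((k : ZMod n) - 1).val + 1 = k := by
    rw [← Nat.cast_pred hk, ZMod.val_cast_of_lt (by omega)]
    omega
  rw [← Set.ncard_coe_finset, coe_filter_univ]
  refine Set.ncard_congr (fun k _ => (k : ZMod n)) (fun k hk => hk.2.2) ?_ ?_
  · rintro k l ⟨hk, hkn, -⟩ ⟨hl, hln, -⟩ h
    rw [← hinv hk hkn, ← hinv hl hln, h]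
  · intro x hx
    refine ⟨(x - 1).val + 1, ⟨by omega, (x - 1).val_lt, ?_⟩, ?_⟩
    · simpa using hx
    · simp

lemma ncard_setOf_four_mul_add_two {p : ℕ} [Fact p.Prime] (hp2 : p ≠ 2) (P : ZMod p → Prop)
    [DecidablePred P] : {k : ℕ | 1 ≤ k ∧ k ≤ p ∧ P (4 * k + 2)}.ncard = #{s | P s} := by
  have h4 : (4 : ZMod p) ≠ 0 := by
    rw [show (4 : ZMod p) = 2 ^ 2 by norm_num]
    exact pow_ne_zero 2 (ZMod.two_ne_zero_of_ne_two hp2)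
  rw [ZMod.ncard_setOf_natCast p (fun x => P (4 * x + 2))]
  exact card_equiv ((Equiv.mulLeft₀ 4 h4).trans (Equiv.addRight 2)) (by simp)

section QuadraticExtension

variable {p : ℕ} [Fact p.Prime] {F : Type*} [Field F] [Algebra (ZMod p) F]

lemma mem_range_algebraMap_of_pow_char_eq_self [Finite F] {y : F} (hy : y ^ p = y) :
    y ∈ Set.range (algebraMap (ZMod p) F) := by
  rw [IsGalois.mem_range_algebraMap_iff_fixed]
  intro σ
  obtain ⟨n, rfl⟩ := (FiniteField.bijective_frobeniusAlgEquivOfAlgebraic_pow (ZMod p) F).2 σ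
  rw [AlgEquiv.coe_pow, FiniteField.coe_frobeniusAlgEquivOfAlgebraic_iterate, ZMod.card]
  induction (n : ℕ) with
  | zero => simp
  | succ k ih =>
    dsimp only at ih ⊢
    rw [pow_succ, pow_mul, ih, hy]

/-- Euler's criterion in `F`: `(p² - 1)/2` is a multiple of `p - 1`. -/
lemma isSquare_algebraMap [Finite F] (hcard : Nat.card F = p ^ 2) (hp2 : p ≠ 2)
    (c : ZMod p) : IsSquare (algebraMap (ZMod p) F c) := by
  have := charP_of_injective_algebraMap' (ZMod p) (A := F) p
  have := Fintype.ofFinite F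
  rcases eq_or_ne c 0 with rfl | hc
  · simp
  have hc' : algebraMap (ZMod p) F c ≠ 0 := by simpa using hc
  obtain ⟨t, rfl⟩ := ((Fact.out : p.Prime).eq_two_or_odd').resolve_left hp2
  have hexp : Fintype.card F / 2 = (2 * t + 1 - 1) * (t + 1) := by
    rw [← Nat.card_eq_fintype_card, hcard, Nat.add_sub_cancel]
    ring_nf
    omega
  rw [FiniteField.isSquare_iff (by rwa [ringChar.eq F]) hc', hexp, pow_mul, ← map_pow,
    ZMod.pow_card_sub_one_eq_one hc, map_one, one_pow]

lemma exists_add_inv_eq [Finite F] (hcard : Nat.card F = p ^ 2) (hp2 : p ≠ 2) (s : ZMod p) :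
    ∃ a : Fˣ, (a : F) + ↑a⁻¹ = algebraMap (ZMod p) F s := by
  have := charP_of_injective_algebraMap' (ZMod p) (A := F) p
  have : NeZero (2 : F) := ⟨Ring.two_ne_zero (by rwa [ringChar.eq F p])⟩
  obtain ⟨x, hx⟩ : ∃ x : F, 1 * (x * x) + -algebraMap (ZMod p) F s * x + 1 = 0 := by
    refine exists_quadratic_eq_zero one_ne_zero ?_
    obtain ⟨d, hd⟩ := isSquare_algebraMap hcard hp2 (s ^ 2 - 4)
    exact ⟨d, by rw [discrim, ← hd, map_sub, map_pow, map_ofNat]; ring⟩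
  have hx0 : x ≠ 0 := by rintro rfl; simp at hx
  refine ⟨Units.mk0 x hx0, ?_⟩
  simp only [Units.val_mk0, Units.val_inv_eq_inv_val]
  field_simp
  linear_combination hx

lemma pow_char_eq_or_eq_inv_of_add_inv_eq {a : Fˣ} {s : ZMod p}
    (h : (a : F) + ↑a⁻¹ = algebraMap (ZMod p) F s) : a ^ p = a ∨ a ^ p = a⁻¹ := by
  have := charP_of_injective_algebraMap' (ZMod p) (A := F) p
  apply Units.eq_or_eq_inv_of_add_inv_eq
  rw [Units.val_pow_eq_pow_val, ← inv_pow, Units.val_pow_eq_pow_val, ← add_pow_char, h,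
    ← map_pow, ZMod.pow_card]

lemma add_inv_mem_range_of_pow_char_succ_eq_one [Finite F] {a : Fˣ} (ha : a ^ (p + 1) = 1) :
    (a : F) + ↑a⁻¹ ∈ Set.range (algebraMap (ZMod p) F) := by
  have := charP_of_injective_algebraMap' (ZMod p) (A := F) p
  have hpow : a ^ p = a⁻¹ := eq_inv_of_mul_eq_one_left (by rwa [← pow_succ])
  apply mem_range_algebraMap_of_pow_char_eq_self
  rw [add_pow_char, ← Units.val_pow_eq_pow_val, ← Units.val_pow_eq_pow_val, inv_pow, hpow,
    inv_inv, add_comm]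

lemma orderOf_sq_le_of_add_inv_eq (hp2 : p ≠ 2) {a : Fˣ} {s : ZMod p}
    (h : (a : F) + ↑a⁻¹ = algebraMap (ZMod p) F s) : orderOf (a ^ 2) ≤ (p + 1) / 2 := by
  have hp := (Fact.out : p.Prime).two_le
  have hodd : p % 2 = 1 := ((Fact.out : p.Prime).eq_two_or_odd).resolve_left hp2
  rcases pow_char_eq_or_eq_inv_of_add_inv_eq h with h' | h'
  · have : (a ^ 2) ^ ((p - 1) / 2) = 1 := by
      rw [← pow_mul, show 2 * ((p - 1) / 2) = p - 1 by omega]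
      refine mul_right_cancel (b := a) ?_
      rw [← pow_succ, Nat.sub_add_cancel (by omega), h', one_mul]
    exact (orderOf_le_of_pow_eq_one (by omega) this).trans (by omega)
  · refine orderOf_le_of_pow_eq_one (by omega) ?_
    rw [← pow_mul, show 2 * ((p + 1) / 2) = p + 1 by omega, pow_succ, h', inv_mul_cancel]

lemma appearanceIndex_eq_orderOf_sq_of_add_inv_eq {a : Fˣ} {s : ZMod p}
    (h : (a : F) + ↑a⁻¹ = algebraMap (ZMod p) F s) (hs : s ^ 2 ≠ 4) :
    appearanceIndex s = orderOf (a ^ 2) := by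
  set e := algebraMap (ZMod p) F
  have ha : a ^ 2 ≠ 1 := by
    rwa [Ne, ← Units.add_inv_sq_eq_four_iff, h, ← map_pow, ← map_ofNat e 4, e.injective.eq_iff]
  rw [← appearanceIndex_map e.injective, ← h, appearanceIndex_add_inv ha]

lemma orderOf_sq_eq_iff_appearanceIndex_eq {a : Fˣ} {s : ZMod p}
    (h : (a : F) + ↑a⁻¹ = algebraMap (ZMod p) F s) {m : ℕ} (hm1 : m ≠ 1) (hmp : m ≠ p) :
    orderOf (a ^ 2) = m ↔ appearanceIndex s = m := by
  by_cases hs : s ^ 2 = 4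
  · have ha : a ^ 2 = 1 :=
      Units.add_inv_sq_eq_four_iff.1 (by rw [h, ← map_pow, hs, map_ofNat])
    rw [ha, orderOf_one, appearanceIndex_of_sq_eq_four p hs]
    omega
  · rw [appearanceIndex_eq_orderOf_sq_of_add_inv_eq h hs]

end QuadraticExtension

lemma FiniteField.card_orderOf_sq_eq_two_mul_totient {F : Type*} [Field F] [Fintype F]
    [DecidableEq F] (hF : ringChar F ≠ 2) {m : ℕ} (hm : 2 * m ∣ Fintype.card F - 1) :
    #{a : Fˣ | orderOf (a ^ 2) = m} = 2 * m.totient := by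
  have hmF : m ∣ Fintype.card Fˣ := by
    rw [Fintype.card_units]; exact (dvd_mul_left m 2).trans hm
  rw [← IsCyclic.card_orderOf_eq_totient hmF,
    card_eq_sum_card_fiberwise (f := (· ^ 2)) (t := {g | orderOf g = m}) (by intro a; simp),
    sum_const_nat (m := 2), mul_comm]
  intro g hg
  rw [mem_filter_univ] at hg
  obtain ⟨a, rfl⟩ : IsSquare g := by
    obtain ⟨k, hk⟩ := hm
    have hodd := FiniteField.odd_card_of_char_ne_two hF
    have : Fintype.card F / 2 = m * k := by rw [mul_assoc] at hk; omega
    rw [FiniteField.unit_isSquare_iff hF, this, pow_mul, ← hg, pow_orderOf_eq_one, one_pow]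
  rw [← sq] at hg ⊢
  have hne : a ≠ -a := by
    intro h
    have : (2 : F) * a = 0 := by
      linear_combination (by simpa using congrArg Units.val h : (a : F) = -a)
    exact (mul_ne_zero (Ring.two_ne_zero hF) a.ne_zero) this
  refine card_eq_two.mpr ⟨a, -a, hne, ?_⟩
  ext b
  simp only [mem_filter, mem_insert, mem_singleton]
  constructor
  · rintro ⟨-, hb⟩
    simpa [Units.ext_iff] using sq_eq_sq_iff_eq_or_eq_neg.mp (congrArg Units.val hb)
  · rintro (rfl | rfl) <;> simp [hg]

section Counting

variable {p : ℕ} [Fact p.Prime]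

lemma card_orderOf_sq_eq_two_mul_card_appearanceIndex {F : Type*} [Field F] [Fintype F]
    [DecidableEq F] [Algebra (ZMod p) F] (hcard : Nat.card F = p ^ 2) (hp2 : p ≠ 2) {m : ℕ}
    (hm : 2 * m ∣ p + 1) (hm1 : 1 < m) :
    #{a : Fˣ | orderOf (a ^ 2) = m} = 2 * #{s : ZMod p | appearanceIndex s = m} := by
  set e := algebraMap (ZMod p) F
  have he : Function.Injective e := e.injective
  have hmp : m ≠ p := by have := Nat.le_of_dvd (by omega) hm; omega
  have hiff {a : Fˣ} {s : ZMod p} (h : (a : F) + ↑a⁻¹ = e s) :=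
    orderOf_sq_eq_iff_appearanceIndex_eq h hm1.ne' hmp
  have key := card_mul_eq_card_mul (fun (a : Fˣ) s => (a : F) + ↑a⁻¹ = e s)
    (s := {a : Fˣ | orderOf (a ^ 2) = m}) (t := {s : ZMod p | appearanceIndex s = m})
    (m := 1) (n := 2) ?_ ?_
  · omega
  · intro a ha
    rw [mem_filter_univ] at ha
    obtain ⟨k, hk⟩ := hm
    obtain ⟨s, hs⟩ := add_inv_mem_range_of_pow_char_succ_eq_one (a := a) (by
      rw [hk, pow_mul, pow_mul, ← ha, pow_orderOf_eq_one, one_pow])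
    refine card_eq_one.mpr ⟨s, ?_⟩
    ext t
    simp only [bipartiteAbove, mem_filter, mem_univ, true_and, mem_singleton]
    constructor
    · rintro ⟨-, ht⟩
      exact (he (hs.trans ht)).symm
    · rintro rfl
      exact ⟨(hiff hs.symm).1 ha, hs.symm⟩
  · intro s hs
    rw [mem_filter_univ] at hs
    obtain ⟨a, ha⟩ := exists_add_inv_eq hcard hp2 s
    have hord : orderOf (a ^ 2) = m := (hiff ha).2 hs
    have hne : a ≠ a⁻¹ := by
      intro h
      rw [sq, eq_inv_iff_mul_eq_one.mp h, orderOf_one] at hord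
      omega
    refine card_eq_two.mpr ⟨a, a⁻¹, hne, ?_⟩
    ext b
    simp only [bipartiteBelow, mem_filter, mem_univ, true_and, mem_insert, mem_singleton]
    constructor
    · rintro ⟨-, hb⟩
      exact Units.eq_or_eq_inv_of_add_inv_eq (hb.trans ha.symm)
    · rintro (rfl | rfl)
      · exact ⟨hord, ha⟩
      · exact ⟨by rw [inv_pow, orderOf_inv, hord], by rw [inv_inv, add_comm, ha]⟩

lemma ZMod.appearanceIndex_le_of_sq_ne_four (hp2 : p ≠ 2) {s : ZMod p} (hs : s ^ 2 ≠ 4) :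
    appearanceIndex s ≤ (p + 1) / 2 := by
  obtain ⟨a, ha⟩ := exists_add_inv_eq (GaloisField.card p 2 two_ne_zero) hp2 s
  rw [appearanceIndex_eq_orderOf_sq_of_add_inv_eq ha hs]
  exact orderOf_sq_le_of_add_inv_eq hp2 ha

lemma ZMod.card_appearanceIndex_eq_totient (hp2 : p ≠ 2) :
    #{s : ZMod p | appearanceIndex s = (p + 1) / 2} = ((p + 1) / 2).totient := by
  classical
  let F := GaloisField p 2
  let _ := Fintype.ofFinite F
  have hcard : Nat.card F = p ^ 2 := GaloisField.card p 2 two_ne_zero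
  have hp := (Fact.out : p.Prime).two_le
  have hodd : p % 2 = 1 := ((Fact.out : p.Prime).eq_two_or_odd).resolve_left hp2
  have h2m : 2 * ((p + 1) / 2) = p + 1 := by omega
  have hdvd : 2 * ((p + 1) / 2) ∣ Fintype.card F - 1 := by
    rw [h2m, ← Nat.card_eq_fintype_card, hcard]
    exact ⟨p - 1, by simpa using Nat.sq_sub_sq p 1⟩
  have h1 := FiniteField.card_orderOf_sq_eq_two_mul_totient (by rwa [ringChar.eq F p]) hdvd
  have h2 := card_orderOf_sq_eq_two_mul_card_appearanceIndex hcard hp2 h2m.dvd (by omega)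
  omega

lemma ZMod.card_appearanceIndex_lt (hp2 : p ≠ 2) :
    #{s : ZMod p | s ^ 2 ≠ 4 ∧ appearanceIndex s < (p + 1) / 2}
      = p - 2 - ((p + 1) / 2).totient := by
  classical
  have hp := (Fact.out : p.Prime).two_le
  have hsub : ({s | appearanceIndex s = (p + 1) / 2} : Finset (ZMod p))
      ⊆ ({s | s ^ 2 ≠ 4} : Finset (ZMod p)) := by
    intro s
    simp only [mem_filter, mem_univ, true_and]
    intro h hs
    rw [appearanceIndex_of_sq_eq_four p hs] at h
    omega
  have hsdiff : ({s | s ^ 2 ≠ 4 ∧ appearanceIndex s < (p + 1) / 2} : Finset (ZMod p))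
      = ({s | s ^ 2 ≠ 4} : Finset (ZMod p)) \
        ({s | appearanceIndex s = (p + 1) / 2} : Finset (ZMod p)) := by
    ext s
    simp only [mem_filter, mem_univ, true_and, mem_sdiff]
    refine and_congr_right fun hs => ?_
    have := ZMod.appearanceIndex_le_of_sq_ne_four hp2 hs
    omega
  rw [hsdiff, card_sdiff_of_subset hsub, ZMod.card_sq_ne_four hp2,
    ZMod.card_appearanceIndex_eq_totient hp2]

end Counting

theorem stmt11 (p : ℕ) (hp : p.Prime) (hp5 : 5 ≤ p) (f : ℕ)
    (hf : f = Nat.totient ((p + 1) / 2)) :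
    {k : ℕ | 1 ≤ k ∧ k ≤ p ∧ shallitZ k p = (p + 1) / 2}.ncard = f ∧
    {k : ℕ | 1 ≤ k ∧ k ≤ p ∧ ¬ p ∣ k * (k + 1) ∧
      shallitZ k p < (p + 1) / 2}.ncard = p - f - 2 := by
  have := Fact.mk hp
  have hp2 : p ≠ 2 := by omega
  subst hf
  simp_rw [shallitZ_eq_appearanceIndex, dvd_mul_succ_iff_sq_eq_four hp2]
  rw [ncard_setOf_four_mul_add_two hp2 (appearanceIndex · = (p + 1) / 2),
    ncard_setOf_four_mul_add_two hp2 (fun s => ¬ s ^ 2 = 4 ∧ appearanceIndex s < (p + 1) / 2),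
    ZMod.card_appearanceIndex_eq_totient hp2, ZMod.card_appearanceIndex_lt hp2]
  exact ⟨rfl, by omega⟩
end

section
/- Let k ≥ 1 and m ≥ 1 be integers with m/2 < z_k(m) < m. Then there exists a prime p not dividing k(k+1) such that z_k(m) = m(p+1)/(2p), z_k(p) = (p+1)/2 and e_p(k) = −1. Moreover, m can be written as m = a·p^b with a ∈ P(k(k+1)), z_k(a) = a, gcd(a, p(p+1)/2) = 1 and b ≥ 1; and if b ≥ 2, then z_k(p²) = p(p+1)/2. -/
/-!
Write `U_n = U_n(k)` and `z = z_k`. The sequence `U` is the Pell `y`-sequence for `a = 2k + 1`: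
`(2k+1 + √d)^n = x_n + U_n √d` with `d = 4k(k+1)`. This gives the periodicity
`m ∣ U_n ↔ z(m) ∣ n`, the rule `z(mn) = lcm(z(m), z(n))` for coprime `m, n`, and the lifting
`p^e ∣ U_n → p^(e+1) ∣ U_(pn)`. Modulo a prime `p ∣ k(k+1)` one has `U_n ≡ n (2k+1)^(n-1)`, so
`z(a) ∣ a` for `a ∈ P(k(k+1))`. For `p ∤ k(k+1)`, Frobenius fixes or swaps the roots
`2k+1 ± 2√(k(k+1))` according to `e_p(k)`, so `z(p) ∣ (p - e_p(k))/2` and `z(p^b) ≤ 2p^b/3`.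

Split `m = a t` with `a ∈ P(k(k+1))` and `t` coprime to `k(k+1)`. Then `z(m) ≤ z(a) z(t) ≤ a z(t)`,
so `m/2 < z(m)` forces `t/2 < z(t)`. Two coprime factors `> 1` would give `z(t) ≤ 4t/9`, so
`t = p^b`, and `e_p(k) = 1` would give `z(p^b) < p^b/2`. Now `z(m)` divides
`N = a p^(b-1) (p+1)/2 ≤ m`, and `z(m) > m/2` forces `z(m) = N`, hence all the equalities.
-/

theorem Nat.eq_and_coprime_of_lt_two_mul_lcm {x y X Y : ℕ} (hx : x ∣ X) (hy : y ∣ Y)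
    (hX : 0 < X) (hY : 0 < Y) (h : X * Y < 2 * x.lcm y) : x = X ∧ y = Y ∧ X.Coprime Y := by
  have hxy : 0 < x * y := Nat.mul_pos (Nat.pos_of_dvd_of_pos hx hX) (Nat.pos_of_dvd_of_pos hy hY)
  have hL : X * Y = x.lcm y := Nat.eq_of_dvd_of_lt_two_mul (Nat.mul_pos hX hY).ne'
    ((Nat.lcm_dvd_mul x y).trans (mul_dvd_mul hx hy)) h
  have hLxy := Nat.le_of_dvd hxy (Nat.lcm_dvd_mul x y)
  have hxX := Nat.le_of_dvd hX hx
  have hyY := Nat.le_of_dvd hY hy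
  obtain rfl : x = X := by nlinarith
  obtain rfl : y = Y := by nlinarith
  refine ⟨rfl, rfl, Nat.eq_of_mul_eq_mul_right (Nat.mul_pos hX hY) ?_⟩
  nth_rw 1 [hL]
  rw [Nat.gcd_mul_lcm, one_mul]

theorem one_mem_setP (N : ℕ) : 1 ∈ setP N :=
  ⟨one_pos, fun _ hq h => absurd h hq.not_dvd_one⟩

theorem mul_mem_setP {N a b : ℕ} (ha : a ∈ setP N) (hb : b ∈ setP N) : a * b ∈ setP N :=
  ⟨Nat.mul_pos ha.1 hb.1, fun q hq hqd =>
    ((Nat.Prime.dvd_mul hq).mp hqd).elim (ha.2 q hq) (hb.2 q hq)⟩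

theorem mem_setP_of_dvd {N a d : ℕ} (ha : a ∈ setP N) (hd : d ∣ a) : d ∈ setP N :=
  ⟨Nat.pos_of_dvd_of_pos hd ha.1, fun q hq hqd => ha.2 q hq (hqd.trans hd)⟩

theorem coprime_of_mem_setP {N a t : ℕ} (ha : a ∈ setP N) (ht : t.Coprime N) : a.Coprime t :=
  Nat.coprime_of_dvd fun q hq hqa hqt => hq.not_dvd_one (ht ▸ Nat.dvd_gcd hqt (ha.2 q hq hqa))

theorem exists_eq_mul_mem_setP_coprime (N : ℕ) {m : ℕ} (hm : 0 < m) :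
    ∃ a t, m = a * t ∧ a ∈ setP N ∧ t.Coprime N := by
  induction m using Nat.recOnPosPrimePosCoprime with
  | zero => omega
  | one => exact ⟨1, 1, rfl, one_mem_setP N, Nat.coprime_one_left N⟩
  | prime_pow p n hp hn =>
    by_cases hpN : p ∣ N
    · refine ⟨p ^ n, 1, (mul_one _).symm, ⟨pow_pos hp.pos n, fun q hq hqp => ?_⟩,
        Nat.coprime_one_left N⟩
      rwa [(Nat.prime_dvd_prime_iff_eq hq hp).mp (hq.dvd_of_dvd_pow hqp)]
    · exact ⟨1, p ^ n, (one_mul _).symm, one_mem_setP N,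
        Nat.Coprime.pow_left n ((Nat.Prime.coprime_iff_not_dvd hp).mpr hpN)⟩
  | coprime a b ha hb _ iha ihb =>
    obtain ⟨a₁, t₁, rfl, ha₁, ht₁⟩ := iha (by omega)
    obtain ⟨a₂, t₂, rfl, ha₂, ht₂⟩ := ihb (by omega)
    exact ⟨a₁ * a₂, t₁ * t₂, by ring, mul_mem_setP ha₁ ha₂, Nat.Coprime.mul_left ht₁ ht₂⟩

namespace Pell

variable {a : ℕ} (a1 : 1 < a)

theorem dvd_yn_add_iff {m z : ℕ} (hz : m ∣ yn a1 z) (n : ℕ) :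
    m ∣ yn a1 (n + z) ↔ m ∣ yn a1 n := by
  have hx : (xn a1 z).Coprime m := (xy_coprime a1 z).coprime_dvd_right hz
  rw [yn_add, Nat.dvd_add_right (hz.mul_left _), hx.symm.dvd_mul_right]

theorem dvd_yn_iff_dvd_yn_mod {m z : ℕ} (hz : m ∣ yn a1 z) (n : ℕ) :
    m ∣ yn a1 n ↔ m ∣ yn a1 (n % z) := by
  conv_lhs => rw [← Nat.mod_add_div n z]
  induction n / z with
  | zero => simp
  | succ q ih => rw [Nat.mul_succ, ← add_assoc, dvd_yn_add_iff a1 hz, ih]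

theorem exists_pos_dvd_yn {m : ℕ} (hm : 0 < m) : ∃ n, 0 < n ∧ m ∣ yn a1 n := by
  have : NeZero m := ⟨hm.ne'⟩
  obtain ⟨i, j, hij, heq⟩ := Finite.exists_ne_map_eq_of_infinite
    fun n => ((xn a1 n : ZMod m), (yn a1 n : ZMod m))
  simp only [Prod.mk.injEq] at heq
  wlog hlt : i < j generalizing i j
  · exact this j i hij.symm ⟨heq.1.symm, heq.2.symm⟩ (by omega)
  refine ⟨j - i, by omega, (ZMod.natCast_eq_zero_iff _ _).mp ?_⟩
  have h := congrArg (Int.cast : ℤ → ZMod m) (yz_sub a1 hlt.le)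
  simp only [yz, xz, Int.cast_sub, Int.cast_mul, Int.cast_natCast] at h
  rw [h, heq.1, heq.2, sub_self]

theorem pow_succ_dvd_yn_mul {p e n : ℕ} (he : 1 ≤ e) (h : p ^ e ∣ yn a1 n) :
    p ^ (e + 1) ∣ yn a1 (n * p) := by
  -- `y_(np) ≡ p x_n^(p-1) y_n [MOD y_n^3]`, and `p^(e+1) ∣ p^(3e) ∣ y_n^3`
  have hcube : p ^ (e + 1) ∣ yn a1 n ^ 3 :=
    (pow_dvd_pow p (by omega : e + 1 ≤ e * 3)).trans (pow_mul p e 3 ▸ pow_dvd_pow_of_dvd h 3)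
  rw [(xy_modEq_yn a1 n p).2.dvd_iff hcube, pow_succ, mul_comm (p ^ e)]
  exact mul_dvd_mul (dvd_mul_right p _) h

theorem pow_add_dvd_yn_mul_pow {p e n : ℕ} (he : 1 ≤ e) (h : p ^ e ∣ yn a1 n) (i : ℕ) :
    p ^ (e + i) ∣ yn a1 (n * p ^ i) := by
  induction i with
  | zero => simpa using h
  | succ i ih =>
    rw [pow_succ, ← mul_assoc, ← add_assoc]
    exact pow_succ_dvd_yn_mul a1 (by omega) ih

end Pell

section

variable {k : ℕ}

theorem one_lt_two_mul_add_one (hk : 0 < k) : 1 < 2 * k + 1 := by omega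

theorem shallitU_eq_yn_s13 (hk : 0 < k) (n : ℕ) :
    shallitU k n = Pell.yn (one_lt_two_mul_add_one hk) n := by
  induction n using Nat.twoStepInduction with
  | zero => simp [shallitU]
  | one => simp [shallitU]
  | more n ih1 ih2 =>
    have h := Pell.yz_succ_succ (one_lt_two_mul_add_one hk) n
    simp only [Pell.yz] at h
    rw [shallitU, ih1, ih2, h]
    push_cast
    ring

theorem natCast_dvd_shallitU_iff (hk : 0 < k) {m n : ℕ} :
    (m : ℤ) ∣ shallitU k n ↔ m ∣ Pell.yn (one_lt_two_mul_add_one hk) n := by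
  rw [shallitU_eq_yn_s13 hk, Int.natCast_dvd_natCast]

theorem shallitU_mul_sub {R : Type*} [CommRing R] {A B : R} (hsum : A + B = 4 * k + 2)
    (hprod : A * B = 1) (n : ℕ) : (shallitU k n : R) * (A - B) = A ^ n - B ^ n := by
  induction n using Nat.twoStepInduction with
  | zero => simp [shallitU]
  | one => simp [shallitU]
  | more n ih1 ih2 =>
    rw [shallitU]
    push_cast
    linear_combination (4 * (k : R) + 2) * ih2 - ih1 + (A ^ n - B ^ n) * hprod
      - (A ^ (n + 1) - B ^ (n + 1)) * hsum

theorem shallitU_succ_eq {R : Type*} [CommRing R] (h : ((2 * k + 1 : ℕ) : R) ^ 2 = 1) (n : ℕ) :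
    (shallitU k (n + 1) : R) = (n + 1) * (2 * k + 1) ^ n := by
  push_cast at h
  induction n using Nat.twoStepInduction with
  | zero => simp [shallitU]
  | one => simp only [shallitU]; push_cast; ring
  | more n ih1 ih2 =>
    rw [shallitU]
    push_cast at ih1 ih2 ⊢
    rw [ih1, ih2]
    linear_combination ((n : R) + 1) * (2 * k + 1) ^ n * h

theorem shallitZ_spec (hk : 0 < k) {m : ℕ} (hm : 0 < m) :
    0 < shallitZ k m ∧ (m : ℤ) ∣ shallitU k (shallitZ k m) := by
  obtain ⟨n, hn, hdvd⟩ := Pell.exists_pos_dvd_yn (one_lt_two_mul_add_one hk) hm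
  exact Nat.sInf_mem (s := {n | 0 < n ∧ (m : ℤ) ∣ shallitU k n})
    ⟨n, hn, (natCast_dvd_shallitU_iff hk).mpr hdvd⟩

theorem shallitZ_pos (hk : 0 < k) {m : ℕ} (hm : 0 < m) : 0 < shallitZ k m :=
  (shallitZ_spec hk hm).1

theorem shallitZ_dvd_iff (hk : 0 < k) {m : ℕ} (hm : 0 < m) (n : ℕ) :
    shallitZ k m ∣ n ↔ (m : ℤ) ∣ shallitU k n := by
  obtain ⟨hzpos, hz⟩ := shallitZ_spec hk hm
  rw [natCast_dvd_shallitU_iff hk] at hz ⊢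
  rw [Pell.dvd_yn_iff_dvd_yn_mod _ hz, Nat.dvd_iff_mod_eq_zero]
  refine ⟨fun h => by simp [h], fun h => ?_⟩
  by_contra hne
  have hle : shallitZ k m ≤ n % shallitZ k m :=
    Nat.sInf_le ⟨Nat.pos_of_ne_zero hne, (natCast_dvd_shallitU_iff hk).mpr h⟩
  exact absurd (Nat.mod_lt n hzpos) hle.not_gt

theorem shallitZ_one (hk : 0 < k) : shallitZ k 1 = 1 :=
  Nat.dvd_one.mp ((shallitZ_dvd_iff hk one_pos 1).mpr (by simp))

theorem shallitZ_dvd_shallitZ (hk : 0 < k) {m n : ℕ} (hn : 0 < n) (h : m ∣ n) :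
    shallitZ k m ∣ shallitZ k n :=
  (shallitZ_dvd_iff hk (Nat.pos_of_dvd_of_pos h hn) _).mpr
    ((Int.natCast_dvd_natCast.mpr h).trans (shallitZ_spec hk hn).2)

theorem shallitZ_mul (hk : 0 < k) {m n : ℕ} (hm : 0 < m) (hn : 0 < n) (hmn : m.Coprime n) :
    shallitZ k (m * n) = (shallitZ k m).lcm (shallitZ k n) := by
  have hmn' : 0 < m * n := Nat.mul_pos hm hn
  refine Nat.dvd_antisymm ?_ (Nat.lcm_dvd (shallitZ_dvd_shallitZ hk hmn' (dvd_mul_right m n))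
    (shallitZ_dvd_shallitZ hk hmn' (dvd_mul_left n m)))
  rw [shallitZ_dvd_iff hk hmn', Nat.cast_mul]
  exact (Nat.isCoprime_iff_coprime.mpr hmn).mul_dvd
    ((shallitZ_dvd_iff hk hm _).mp (Nat.dvd_lcm_left _ _))
    ((shallitZ_dvd_iff hk hn _).mp (Nat.dvd_lcm_right _ _))

theorem shallitZ_mul_le (hk : 0 < k) {m n : ℕ} (hm : 0 < m) (hn : 0 < n) (hmn : m.Coprime n) :
    shallitZ k (m * n) ≤ shallitZ k m * shallitZ k n := by
  rw [shallitZ_mul hk hm hn hmn]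
  exact Nat.le_of_dvd (Nat.mul_pos (shallitZ_pos hk hm) (shallitZ_pos hk hn))
    (Nat.lcm_dvd_mul _ _)

theorem shallitZ_pow_add_dvd (hk : 0 < k) {p e : ℕ} (hp : 0 < p) (he : 1 ≤ e) (i : ℕ) :
    shallitZ k (p ^ (e + i)) ∣ p ^ i * shallitZ k (p ^ e) := by
  have h := (natCast_dvd_shallitU_iff hk).mp (shallitZ_spec hk (pow_pos hp e)).2
  rw [shallitZ_dvd_iff hk (pow_pos hp _), natCast_dvd_shallitU_iff hk, mul_comm (p ^ i)]
  exact Pell.pow_add_dvd_yn_mul_pow _ he h i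

theorem shallitZ_pow_succ_dvd (hk : 0 < k) {p : ℕ} (hp : 0 < p) (n : ℕ) :
    shallitZ k (p ^ (n + 1)) ∣ p ^ n * shallitZ k p := by
  simpa [add_comm] using shallitZ_pow_add_dvd hk hp le_rfl n

theorem natCast_dvd_shallitU_iff_of_dvd {m : ℕ} (hm : m ∣ 4 * (k * (k + 1))) (n : ℕ) :
    (m : ℤ) ∣ shallitU k n ↔ m ∣ n := by
  have hr : ((2 * k + 1 : ℕ) : ZMod m) ^ 2 = 1 := by
    have h4 := (ZMod.natCast_eq_zero_iff _ m).mpr hm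
    push_cast at h4 ⊢
    linear_combination h4
  have hunit : IsUnit ((2 * k + 1 : ℕ) : ZMod m) := IsUnit.of_mul_eq_one _ (by rw [← sq, hr])
  rw [← ZMod.intCast_zmod_eq_zero_iff_dvd, ← ZMod.natCast_eq_zero_iff]
  cases n with
  | zero => simp [shallitU]
  | succ n =>
    rw [shallitU_succ_eq hr]
    push_cast at hunit ⊢
    exact (hunit.pow n).mul_left_eq_zero

theorem shallitZ_dvd_self_of_mem_setP (hk : 0 < k) {a : ℕ} (ha : a ∈ setP (k * (k + 1))) :
    shallitZ k a ∣ a := by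
  induction a using Nat.recOnPosPrimePosCoprime with
  | zero => exact absurd ha.1 (lt_irrefl 0)
  | one => rw [shallitZ_one hk]
  | prime_pow p n hp hn =>
    have hpk : p ∣ 4 * (k * (k + 1)) := (ha.2 p hp (dvd_pow_self p hn.ne')).mul_left 4
    have hzp : shallitZ k p ∣ p :=
      (shallitZ_dvd_iff hk hp.pos p).mpr ((natCast_dvd_shallitU_iff_of_dvd hpk p).mpr dvd_rfl)
    obtain ⟨n, rfl⟩ := Nat.exists_eq_add_of_le' hn
    exact (shallitZ_pow_succ_dvd hk hp.pos n).trans (pow_succ p n ▸ mul_dvd_mul_left _ hzp)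
  | coprime a b _ _ hab iha ihb =>
    rw [shallitZ_mul hk (by omega) (by omega) hab]
    exact Nat.lcm_dvd ((iha (mem_setP_of_dvd ha (dvd_mul_right a b))).trans (dvd_mul_right a b))
      ((ihb (mem_setP_of_dvd ha (dvd_mul_left b a))).trans (dvd_mul_left b a))

theorem ne_two_of_not_dvd_mul_succ {p : ℕ} (hpk : ¬ p ∣ k * (k + 1)) : p ≠ 2 := by
  rintro rfl
  exact hpk (Nat.even_mul_succ_self k).two_dvd

theorem legendreSym_eq_one_or_neg_one_of_not_dvd {p : ℕ} [Fact p.Prime]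
    (hpk : ¬ p ∣ k * (k + 1)) :
    legendreSym p ((k : ℤ) * ((k : ℤ) + 1)) = 1 ∨ legendreSym p ((k : ℤ) * ((k : ℤ) + 1)) = -1 :=
  legendreSym.eq_one_or_neg_one p <| by
    rw [Ne, ZMod.intCast_zmod_eq_zero_iff_dvd]
    exact_mod_cast hpk

theorem shallitU_cast_eq_zero_of_pow_eq_one {K : Type*} [Field K] {A B : K}
    (hsum : A + B = 4 * k + 2) (hprod : A * B = 1) (hAB : A ≠ B) {h : ℕ} (hA : A ^ (2 * h) = 1) :
    (shallitU k h : K) = 0 := by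
  have hpow : A ^ h = B ^ h :=
    calc A ^ h = A ^ (2 * h) * B ^ h := by
          rw [two_mul, pow_add, mul_assoc, ← mul_pow, hprod, one_pow, mul_one]
      _ = B ^ h := by rw [hA, one_mul]
  have hbinet := shallitU_mul_sub hsum hprod h
  rw [hpow, sub_self] at hbinet
  exact (mul_eq_zero.mp hbinet).resolve_right (sub_ne_zero.mpr hAB)

theorem prime_dvd_shallitU_of_two_mul_eq {p : ℕ} [hp : Fact p.Prime] (hpk : ¬ p ∣ k * (k + 1))
    {h : ℕ} (hh : 2 * (h : ℤ) = p - legendreSym p ((k : ℤ) * ((k : ℤ) + 1))) :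
    (p : ℤ) ∣ shallitU k h := by
  let K := AlgebraicClosure (ZMod p)
  set e := legendreSym p ((k : ℤ) * ((k : ℤ) + 1))
  have hp2 := ne_two_of_not_dvd_mul_succ hpk
  have hpodd : p % 2 = 1 := hp.out.eq_two_or_odd.resolve_left hp2
  have hc : (k : K) * (k + 1) ≠ 0 := by
    rw [Ne, ← Nat.cast_succ, ← Nat.cast_mul, CharP.cast_eq_zero_iff K p]
    exact hpk
  have h2 : (2 : K) ≠ 0 := Ring.two_ne_zero (by rwa [ringChar.eq K p])
  obtain ⟨x, hx⟩ := IsAlgClosed.exists_pow_nat_eq ((k : K) * (k + 1)) two_pos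
  have hx0 : x ≠ 0 := by rintro rfl; exact hc (by simpa using hx.symm)
  -- Euler's criterion
  have hxp : x ^ p = e * x := by
    have heuler := congrArg (algebraMap (ZMod p) K) (legendreSym.eq_pow p ((k : ℤ) * ((k : ℤ) + 1)))
    simp only [map_intCast, map_pow, Int.cast_mul, Int.cast_natCast, Int.cast_add, Int.cast_one,
      map_mul, map_natCast, map_add, map_one] at heuler
    calc x ^ p = (x ^ 2) ^ (p / 2) * x := by rw [← pow_mul, ← pow_succ]; congr 1; omega
      _ = e * x := by rw [hx, ← heuler]
  set A : K := 2 * k + 1 + 2 * x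
  set B : K := 2 * k + 1 - 2 * x
  have hprod : A * B = 1 := by linear_combination (-4 : K) * hx
  have hAB : A ≠ B := fun hAB => mul_ne_zero (mul_ne_zero h2 h2) hx0 (by linear_combination hAB)
  -- Frobenius fixes `A` if `e = 1` and maps it to `B = A⁻¹` if `e = -1`,
  -- so in either case `A ^ (p - e) = 1`
  have hAp : A ^ p = 2 * k + 1 + 2 * e * x := by
    simp only [A, ← frobenius_def, map_add, map_mul, map_natCast, map_ofNat, map_one]
    rw [frobenius_def, hxp, mul_assoc]
  refine (CharP.intCast_eq_zero_iff K p _).mp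
    (shallitU_cast_eq_zero_of_pow_eq_one (by ring) hprod hAB ?_)
  obtain he | he : e = 1 ∨ e = -1 := legendreSym_eq_one_or_neg_one_of_not_dvd hpk <;>
    rw [he] at hh hAp
  · have h2h : 2 * h + 1 = p := by omega
    apply mul_right_cancel₀ (left_ne_zero_of_mul_eq_one hprod)
    rw [← pow_succ, h2h, hAp, one_mul]
    push_cast; ring
  · have h2h : 2 * h = p + 1 := by omega
    rw [h2h, pow_succ, hAp]
    push_cast
    linear_combination hprod

theorem shallitZ_dvd_of_two_mul_eq (hk : 0 < k) {p : ℕ} [hp : Fact p.Prime]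
    (hpk : ¬ p ∣ k * (k + 1)) {h : ℕ}
    (hh : 2 * (h : ℤ) = p - legendreSym p ((k : ℤ) * ((k : ℤ) + 1))) : shallitZ k p ∣ h :=
  (shallitZ_dvd_iff hk hp.out.pos h).mpr (prime_dvd_shallitU_of_two_mul_eq hpk hh)

theorem two_mul_shallitZ_le (hk : 0 < k) {p : ℕ} (hp : p.Prime) (hpk : ¬ p ∣ k * (k + 1)) :
    2 * shallitZ k p ≤ p + 1 := by
  have : Fact p.Prime := ⟨hp⟩
  have hodd : p % 2 = 1 := hp.eq_two_or_odd.resolve_left (ne_two_of_not_dvd_mul_succ hpk)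
  have hp3 : 3 ≤ p := by have := hp.two_le; omega
  rcases legendreSym_eq_one_or_neg_one_of_not_dvd hpk with he | he
  · have := Nat.le_of_dvd (by omega)
      (shallitZ_dvd_of_two_mul_eq hk hpk (h := (p - 1) / 2) (by rw [he]; omega))
    omega
  · have := Nat.le_of_dvd (by omega)
      (shallitZ_dvd_of_two_mul_eq hk hpk (h := (p + 1) / 2) (by rw [he]; omega))
    omega

theorem three_mul_shallitZ_pow_le (hk : 0 < k) {p n : ℕ} (hp : p.Prime)
    (hpk : ¬ p ∣ k * (k + 1)) (hn : 1 ≤ n) : 3 * shallitZ k (p ^ n) ≤ 2 * p ^ n := by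
  have hp3 : 3 ≤ p := by
    have := hp.two_le; have := ne_two_of_not_dvd_mul_succ hpk; omega
  have hzp := two_mul_shallitZ_le hk hp hpk
  obtain ⟨n, rfl⟩ := Nat.exists_eq_add_of_le' hn
  have hzpn := Nat.le_of_dvd (Nat.mul_pos (pow_pos hp.pos _) (shallitZ_pos hk hp.pos))
    (shallitZ_pow_succ_dvd hk hp.pos n)
  calc 3 * shallitZ k (p ^ (n + 1)) ≤ p ^ n * (3 * shallitZ k p) := by linarith
    _ ≤ p ^ n * (2 * p) := Nat.mul_le_mul_left _ (by omega)
    _ = 2 * p ^ (n + 1) := by ring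

theorem three_mul_shallitZ_le (hk : 0 < k) {t : ℕ} (ht : t.Coprime (k * (k + 1))) (ht1 : 1 < t) :
    3 * shallitZ k t ≤ 2 * t := by
  induction t using Nat.recOnPosPrimePosCoprime with
  | zero => omega
  | one => omega
  | prime_pow p n hp hn =>
    exact three_mul_shallitZ_pow_le hk hp
      ((Nat.Prime.coprime_iff_not_dvd hp).mp (ht.coprime_dvd_left (dvd_pow_self p hn.ne'))) hn
  | coprime a b ha hb hab iha ihb =>
    have hza := iha ht.coprime_mul_right ha
    have hzb := ihb ht.coprime_mul_left hb
    have hzab := shallitZ_mul_le hk (by omega) (by omega) hab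
    nlinarith

theorem one_lt_and_lt_two_mul_shallitZ (hk : 0 < k) {a t : ℕ} (ha : a ∈ setP (k * (k + 1)))
    (hat : a.Coprime t) (h1 : a * t < 2 * shallitZ k (a * t)) (h2 : shallitZ k (a * t) < a * t) :
    1 < t ∧ t < 2 * shallitZ k t := by
  have hza := shallitZ_dvd_self_of_mem_setP hk ha
  have ht0 : 0 < t := Nat.pos_of_ne_zero (by rintro rfl; simp at h2)
  refine ⟨?_, ?_⟩
  · by_contra! ht1
    obtain rfl : t = 1 := by omega
    rw [mul_one] at h1 h2
    exact h2.ne (Nat.eq_of_dvd_of_lt_two_mul ha.1.ne' hza h1).symm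
  · have := shallitZ_mul_le hk ha.1 ht0 hat
    nlinarith [Nat.le_of_dvd ha.1 hza]

theorem exists_eq_prime_pow_of_lt_two_mul_shallitZ (hk : 0 < k) {t : ℕ}
    (ht : t.Coprime (k * (k + 1))) (ht1 : 1 < t) (hzt : t < 2 * shallitZ k t) :
    ∃ p b, p.Prime ∧ t = p ^ (b + 1) := by
  obtain ⟨p, hp, hpt⟩ := Nat.exists_prime_and_dvd ht1.ne'
  obtain ⟨b, s, hps, rfl⟩ := Nat.exists_eq_pow_mul_and_not_dvd (by omega : t ≠ 0) p hp.ne_one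
  have hb : 1 ≤ b := by
    by_contra! hb0
    rw [Nat.lt_one_iff.mp hb0, pow_zero, one_mul] at hpt
    exact hps hpt
  obtain ⟨b, rfl⟩ := Nat.exists_eq_add_of_le' hb
  refine ⟨p, b, hp, ?_⟩
  have hs : 0 < s := Nat.pos_of_ne_zero (by rintro rfl; simp at ht1)
  rcases Nat.lt_or_ge 1 s with hs1 | hs1
  swap
  · rw [show s = 1 by omega, mul_one]
  have hzpb := three_mul_shallitZ_pow_le hk hp ((Nat.Prime.coprime_iff_not_dvd hp).mp
    (ht.coprime_mul_right.coprime_dvd_left (dvd_pow_self p (by omega)))) hb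
  have hzs := three_mul_shallitZ_le hk ht.coprime_mul_left hs1
  have hzt' := shallitZ_mul_le hk (pow_pos hp.pos (b + 1)) hs
    (Nat.Coprime.pow_left (b + 1) ((Nat.Prime.coprime_iff_not_dvd hp).mpr hps))
  nlinarith

theorem legendreSym_eq_neg_one_of_lt_two_mul_shallitZ (hk : 0 < k) {p b : ℕ} [hp : Fact p.Prime]
    (hpk : ¬ p ∣ k * (k + 1)) (hz : p ^ (b + 1) < 2 * shallitZ k (p ^ (b + 1))) :
    legendreSym p ((k : ℤ) * ((k : ℤ) + 1)) = -1 := by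
  refine (legendreSym_eq_one_or_neg_one_of_not_dvd hpk).resolve_left fun he => ?_
  have hp3 : 3 ≤ p := by
    have := hp.out.two_le; have := ne_two_of_not_dvd_mul_succ hpk; omega
  have hodd : p % 2 = 1 := hp.out.eq_two_or_odd.resolve_left (ne_two_of_not_dvd_mul_succ hpk)
  have hzp : shallitZ k p ∣ (p - 1) / 2 := shallitZ_dvd_of_two_mul_eq hk hpk (by rw [he]; omega)
  have hle := Nat.le_of_dvd (Nat.mul_pos (pow_pos hp.out.pos _) (by omega))
    ((shallitZ_pow_succ_dvd hk hp.out.pos b).trans (mul_dvd_mul_left (p ^ b) hzp))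
  have : 2 * shallitZ k (p ^ (b + 1)) < p ^ (b + 1) :=
    calc 2 * shallitZ k (p ^ (b + 1)) ≤ p ^ b * (2 * ((p - 1) / 2)) := by linarith
      _ < p ^ b * p := Nat.mul_lt_mul_of_pos_left (by omega) (pow_pos hp.out.pos b)
      _ = p ^ (b + 1) := (pow_succ p b).symm
  omega

theorem shallitZ_eq_of_lt_two_mul_shallitZ_mul (hk : 0 < k) {a p b h : ℕ}
    (ha : a ∈ setP (k * (k + 1))) (hp : 0 < p) (hat : a.Coprime (p ^ (b + 1)))
    (hzp : shallitZ k p ∣ h) (hh : 0 < h) (hhp : h ≤ p)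
    (h1 : a * p ^ (b + 1) < 2 * shallitZ k (a * p ^ (b + 1))) :
    shallitZ k a = a ∧ shallitZ k (p ^ (b + 1)) = p ^ b * h ∧ a.Coprime (p ^ b * h) :=
  Nat.eq_and_coprime_of_lt_two_mul_lcm (shallitZ_dvd_self_of_mem_setP hk ha)
    ((shallitZ_pow_succ_dvd hk hp b).trans (mul_dvd_mul_left (p ^ b) hzp)) ha.1
    (Nat.mul_pos (pow_pos hp b) hh) <| by
      rw [← shallitZ_mul hk ha.1 (pow_pos hp _) hat]
      refine lt_of_le_of_lt (Nat.mul_le_mul_left a ?_) h1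
      rw [pow_succ]
      exact Nat.mul_le_mul_left _ hhp

theorem shallitZ_eq_of_shallitZ_pow_succ_eq (hk : 0 < k) {p b h : ℕ} (hp : 0 < p)
    (hzp : shallitZ k p ∣ h) (hh : 0 < h) (heq : shallitZ k (p ^ (b + 1)) = p ^ b * h) :
    shallitZ k p = h :=
  Nat.le_antisymm (Nat.le_of_dvd hh hzp) <| Nat.le_of_mul_le_mul_left (heq ▸ Nat.le_of_dvd
    (Nat.mul_pos (pow_pos hp b) (shallitZ_pos hk hp)) (shallitZ_pow_succ_dvd hk hp b))
    (pow_pos hp b)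

theorem shallitZ_sq_of_shallitZ_pow_succ_eq (hk : 0 < k) {p b : ℕ} (hp : 0 < p) (hb : 1 ≤ b)
    (h : shallitZ k (p ^ (b + 1)) = p ^ b * shallitZ k p) :
    shallitZ k (p ^ 2) = p * shallitZ k p := by
  have hup : shallitZ k (p ^ 2) ∣ p * shallitZ k p := by
    simpa using shallitZ_pow_succ_dvd hk hp 1
  obtain ⟨c, rfl⟩ := Nat.exists_eq_add_of_le' hb
  have hlow := shallitZ_pow_add_dvd hk hp one_le_two c
  rw [show 2 + c = c + 1 + 1 by omega, h, pow_succ, mul_assoc] at hlow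
  exact Nat.le_antisymm (Nat.le_of_dvd (Nat.mul_pos hp (shallitZ_pos hk hp)) hup)
    (Nat.le_of_mul_le_mul_left (Nat.le_of_dvd (Nat.mul_pos (pow_pos hp c)
      (shallitZ_pos hk (pow_pos hp 2))) hlow) (pow_pos hp c))

end

theorem stmt13_general (k m : ℕ) (hk : 1 ≤ k)
    (h1 : m < 2 * shallitZ k m) (h2 : shallitZ k m < m) :
    ∃ p : ℕ, ∃ hp : p.Prime, ¬ p ∣ k * (k + 1) ∧
      2 * p * shallitZ k m = m * (p + 1) ∧
      2 * shallitZ k p = p + 1 ∧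
      @legendreSym p ⟨hp⟩ ((k : ℤ) * ((k : ℤ) + 1)) = -1 ∧
      ∃ a b : ℕ, m = a * p ^ b ∧ a ∈ setP (k * (k + 1)) ∧ shallitZ k a = a ∧
        Nat.gcd a (p * (p + 1) / 2) = 1 ∧ 1 ≤ b ∧
        (2 ≤ b → 2 * shallitZ k (p ^ 2) = p * (p + 1)) := by
  obtain ⟨a, t, rfl, ha, ht⟩ := exists_eq_mul_mem_setP_coprime (k * (k + 1)) (by omega : 0 < m)
  have hat := coprime_of_mem_setP ha ht
  obtain ⟨ht1, hzt⟩ := one_lt_and_lt_two_mul_shallitZ hk ha hat h1 h2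
  obtain ⟨p, b, hp, rfl⟩ := exists_eq_prime_pow_of_lt_two_mul_shallitZ hk ht ht1 hzt
  have : Fact p.Prime := ⟨hp⟩
  have hpk : ¬ p ∣ k * (k + 1) :=
    (Nat.Prime.coprime_iff_not_dvd hp).mp (ht.coprime_dvd_left (dvd_pow_self p b.succ_ne_zero))
  have hleg := legendreSym_eq_neg_one_of_lt_two_mul_shallitZ hk hpk hzt
  set h := (p + 1) / 2
  have h2h : 2 * h = p + 1 := by
    have := hp.eq_two_or_odd.resolve_left (ne_two_of_not_dvd_mul_succ hpk); omega
  have hzp : shallitZ k p ∣ h := shallitZ_dvd_of_two_mul_eq hk hpk (by rw [hleg]; omega)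
  obtain ⟨hza, hzpb, hcop⟩ :=
    shallitZ_eq_of_lt_two_mul_shallitZ_mul hk ha hp.pos hat hzp (by omega) (by omega) h1
  have hzp' := shallitZ_eq_of_shallitZ_pow_succ_eq hk hp.pos hzp (by omega) hzpb
  refine ⟨p, hp, hpk, ?_, by omega, hleg, a, b + 1, rfl, ha, hza, ?_, by omega, fun hb => ?_⟩
  · rw [shallitZ_mul hk ha.1 (pow_pos hp.pos _) hat, hza, hzpb, hcop.lcm_eq_mul, ← h2h]
    ring
  · rw [← h2h, mul_left_comm, Nat.mul_div_cancel_left _ two_pos]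
    exact Nat.Coprime.mul_right (hat.coprime_dvd_right (dvd_pow_self p b.succ_ne_zero))
      (hcop.coprime_dvd_right (dvd_mul_left h _))
  · rw [shallitZ_sq_of_shallitZ_pow_succ_eq hk hp.pos (b := b) (by omega) (by rw [hzpb, hzp']),
      hzp', ← h2h]
    ring

theorem stmt13 (k m : ℕ) (hk : 1 ≤ k) (hm : 1 ≤ m)
    (h1 : m < 2 * shallitZ k m) (h2 : shallitZ k m < m) :
    ∃ p : ℕ, ∃ hp : p.Prime, ¬ p ∣ k * (k + 1) ∧
      2 * p * shallitZ k m = m * (p + 1) ∧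
      2 * shallitZ k p = p + 1 ∧
      @legendreSym p ⟨hp⟩ ((k : ℤ) * ((k : ℤ) + 1)) = -1 ∧
      ∃ a b : ℕ, m = a * p ^ b ∧ a ∈ setP (k * (k + 1)) ∧ shallitZ k a = a ∧
        Nat.gcd a (p * (p + 1) / 2) = 1 ∧ 1 ≤ b ∧
        (2 ≤ b → 2 * shallitZ k (p ^ 2) = p * (p + 1)) :=
  stmt13_general k m hk h1 h2
end

section
/- (a) For every integer n ≥ 2^7·5^6 there exist integers a ≥ 1 and b ≥ 0 such that (380/453)·n ≤ 2^a·5^b ≤ n. (b) For every integer n ≥ 2^7·5^15 there exist integers a ≥ 1 and b ≥ 0 such that (35/39)·n ≤ 2^a·5^b ≤ n. -/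
/-!
Let `m = 2^a·5^b` be the largest such number not exceeding `n`. Any other number of this form
that exceeds `m` must exceed `n`, so a multiplicative move `m ↦ m·q/p` with `p < q` that stays in
the set bounds `n` by `m·q/p`. If `5^3 ∣ m`, trading `5^3` for `2^7` gives `n < (128/125)·m`;
otherwise `b ≤ 2`, and the lower bound `n ≥ 2^7·5^e` forces `2^(x+1) ∣ m`, so trading `2^x`
for `5^y` gives `n < (5^y/2^x)·m`.
-/

def evenTwoFivePowers : Set ℕ :=
  {m | ∃ a b : ℕ, 1 ≤ a ∧ 2 ^ a * 5 ^ b = m}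

lemma exists_isGreatest_evenTwoFivePowers_le {n w : ℕ} (hw : w ∈ evenTwoFivePowers)
    (hwn : w ≤ n) : ∃ m, IsGreatest {m ∈ evenTwoFivePowers | m ≤ n} m := by
  have hfin : {m ∈ evenTwoFivePowers | m ≤ n}.Finite :=
    (Set.finite_Iic n).subset fun _ hm => hm.2
  obtain ⟨m, hm, hmax⟩ := Set.exists_max_image _ id hfin ⟨w, hw, hwn⟩
  exact ⟨m, hm, hmax⟩

lemma le_of_isGreatest_of_mul_eq {ρ : ℝ} {n m m' p q : ℕ} (hρ : 0 ≤ ρ)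
    (hm : IsGreatest {m ∈ evenTwoFivePowers | m ≤ n} m) (hm' : m' ∈ evenTwoFivePowers)
    (hmul : m' * p = m * q) (hpq : p < q) (hρpq : ρ * q ≤ p) : ρ * n ≤ m := by
  have hm0 : 0 < m := by obtain ⟨a, b, -, rfl⟩ := hm.1.1; positivity
  have hp : 0 < p := Nat.pos_of_ne_zero <| by
    rintro rfl
    simp [hm0.ne', (Nat.zero_lt_of_lt hpq).ne'] at hmul
  have hmm' : m < m' := by
    by_contra! h
    have : m * q ≤ m * p := hmul ▸ Nat.mul_le_mul_right p h
    exact (Nat.le_of_mul_le_mul_left this hm0).not_gt hpq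
  have hnm' : (n : ℝ) ≤ m' := by
    exact_mod_cast (not_le.1 fun h => (hm.2 ⟨hm', h⟩).not_gt hmm').le
  have hmul' : (m' : ℝ) * p = m * q := by exact_mod_cast hmul
  have hm0' : (0 : ℝ) ≤ m := m.cast_nonneg
  calc ρ * n ≤ ρ * m' := mul_le_mul_of_nonneg_left hnm' hρ
    _ ≤ m := by
      rw [← mul_le_mul_iff_of_pos_right (Nat.cast_pos.2 hp : (0 : ℝ) < p), mul_assoc, hmul']
      nlinarith

theorem exists_evenTwoFivePower_between (ρ : ℝ) (x y e : ℕ) (hρ : 0 ≤ ρ)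
    (hρ75 : ρ * 2 ^ 7 ≤ 5 ^ 3) (hρxy : ρ * 5 ^ y ≤ 2 ^ x) (hxy : 2 ^ x < 5 ^ y)
    (he : 25 * 2 ^ x < 2 ^ 7 * 5 ^ e) (n : ℕ) (hn : 2 ^ 7 * 5 ^ e ≤ n) :
    ∃ a b : ℕ, 1 ≤ a ∧ ρ * n ≤ 2 ^ a * 5 ^ b ∧ ((2 : ℝ) ^ a * 5 ^ b) ≤ n := by
  have hlow : 2 ^ 7 * 5 ^ e ∈ evenTwoFivePowers := ⟨7, e, by norm_num, rfl⟩
  obtain ⟨m, hm⟩ := exists_isGreatest_evenTwoFivePowers_le hlow hn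
  have hm_low : 2 ^ 7 * 5 ^ e ≤ m := hm.2 ⟨hlow, hn⟩
  obtain ⟨⟨a, b, ha, rfl⟩, hmn⟩ := hm.1
  refine ⟨a, b, ha, ?_, by exact_mod_cast hmn⟩
  rcases le_or_gt 3 b with hb | hb
  · obtain ⟨b, rfl⟩ := Nat.exists_eq_add_of_le hb
    have := le_of_isGreatest_of_mul_eq (p := 5 ^ 3) (q := 2 ^ 7) hρ hm
      ⟨a + 7, b, by omega, rfl⟩ (by ring) (by norm_num) (by exact_mod_cast hρ75)
    exact_mod_cast this
  · have hxa : x < a := by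
      by_contra! hax
      have : 2 ^ a * 5 ^ b ≤ 2 ^ x * 5 ^ 2 :=
        Nat.mul_le_mul (Nat.pow_le_pow_right (by norm_num) hax)
          (Nat.pow_le_pow_right (by norm_num) (by omega))
      omega
    obtain ⟨a, rfl⟩ := Nat.exists_eq_add_of_lt hxa
    have := le_of_isGreatest_of_mul_eq (p := 2 ^ x) (q := 5 ^ y) hρ hm
      ⟨a + 1, b + y, by omega, rfl⟩ (by ring) hxy (by exact_mod_cast hρxy)
    exact_mod_cast this

theorem stmt17 :
    (∀ n : ℕ, 2 ^ 7 * 5 ^ 6 ≤ n → ∃ a b : ℕ, 1 ≤ a ∧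
      (380 / 453 : ℝ) * n ≤ 2 ^ a * 5 ^ b ∧ ((2 : ℝ) ^ a * 5 ^ b) ≤ n) ∧
    (∀ n : ℕ, 2 ^ 7 * 5 ^ 15 ≤ n → ∃ a b : ℕ, 1 ≤ a ∧
      (35 / 39 : ℝ) * n ≤ 2 ^ a * 5 ^ b ∧ ((2 : ℝ) ^ a * 5 ^ b) ≤ n) :=
  ⟨exists_evenTwoFivePower_between _ 16 7 6 (by norm_num) (by norm_num) (by norm_num)
      (by norm_num) (by norm_num),
    exists_evenTwoFivePower_between _ 37 16 15 (by norm_num) (by norm_num) (by norm_num)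
      (by norm_num) (by norm_num)⟩
end
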